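/- arXiv:2105.05295 — 13 statements merged into one kernel-verified Lean document; each statement's English description precedes it below -/
import Mathlib

section
/- Let 0 < b_c < a_c and let P = (x, y, z) ∈ ℝ³. Suppose k₀, k₁, k₂ are pairwise distinct reals, none equal to 0, −b_c², or −a_c², such that x²/(a_c² + k_i) + y²/(b_c² + k_i) + z²/k_i = 1 for i = 0, 1, 2. Then x² = (a_c² + k₀)(a_c² + k₁)(a_c² + k₂)/((a_c² − b_c²)·a_c²), y² = (b_c² + k₀)(b_c² + k₁)(b_c² + k₂)/(b_c²·(b_c² − a_c²)), and z² = k₀·k₁·k₂/(a_c²·b_c²). -/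
/-- Cartesian coordinates in terms of spatial elliptic coordinates: if
`k₀, k₁, k₂` are pairwise distinct parameters of confocal quadrics through
`P = (x, y, z)`, then `x², y², z²` have the stated product formulas. -/
theorem stmt2 (ac bc x y z : ℝ) (hbc : 0 < bc) (hba : bc < ac)
    (k : Fin 3 → ℝ)
    (hinj : Function.Injective k)
    (hk : ∀ i, k i ≠ 0 ∧ k i ≠ -bc ^ 2 ∧ k i ≠ -ac ^ 2)
    (heq : ∀ i, x ^ 2 / (ac ^ 2 + k i) + y ^ 2 / (bc ^ 2 + k i) + z ^ 2 / k i = 1) :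
    x ^ 2 = (ac ^ 2 + k 0) * (ac ^ 2 + k 1) * (ac ^ 2 + k 2) /
      ((ac ^ 2 - bc ^ 2) * ac ^ 2) ∧
    y ^ 2 = (bc ^ 2 + k 0) * (bc ^ 2 + k 1) * (bc ^ 2 + k 2) /
      (bc ^ 2 * (bc ^ 2 - ac ^ 2)) ∧
    z ^ 2 = k 0 * k 1 * k 2 / (ac ^ 2 * bc ^ 2) := by
  have hac : 0 < ac := hbc.trans hba
  have d01 : k 0 - k 1 ≠ 0 := sub_ne_zero.mpr fun h => absurd (hinj h) (by decide)
  have d02 : k 0 - k 2 ≠ 0 := sub_ne_zero.mpr fun h => absurd (hinj h) (by decide)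
  have d12 : k 1 - k 2 ≠ 0 := sub_ne_zero.mpr fun h => absurd (hinj h) (by decide)
  -- nonzero denominators and cleared (polynomial) equations for each i
  have clear : ∀ i, x ^ 2 * ((bc ^ 2 + k i) * k i) + y ^ 2 * ((ac ^ 2 + k i) * k i)
      + z ^ 2 * ((ac ^ 2 + k i) * (bc ^ 2 + k i))
      = (ac ^ 2 + k i) * (bc ^ 2 + k i) * k i := by
    intro i
    obtain ⟨h0, hb, ha⟩ := hk i
    have hA : ac ^ 2 + k i ≠ 0 := fun h => ha (by linarith)
    have hB : bc ^ 2 + k i ≠ 0 := fun h => hb (by linarith)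
    have h := heq i
    field_simp at h
    linear_combination h
  -- each k i is a root of the monic cubic with these coefficients
  have R : ∀ i, k i ^ 3 + (ac ^ 2 + bc ^ 2 - x ^ 2 - y ^ 2 - z ^ 2) * k i ^ 2
      + (ac ^ 2 * bc ^ 2 - x ^ 2 * bc ^ 2 - y ^ 2 * ac ^ 2 - z ^ 2 * (ac ^ 2 + bc ^ 2)) * k i
      - z ^ 2 * ac ^ 2 * bc ^ 2 = 0 := by
    intro i
    linear_combination -(clear i)
  -- divided differences
  have Q01 : k 0 ^ 2 + k 0 * k 1 + k 1 ^ 2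
      + (ac ^ 2 + bc ^ 2 - x ^ 2 - y ^ 2 - z ^ 2) * (k 0 + k 1)
      + (ac ^ 2 * bc ^ 2 - x ^ 2 * bc ^ 2 - y ^ 2 * ac ^ 2 - z ^ 2 * (ac ^ 2 + bc ^ 2)) = 0 := by
    have h : (k 0 - k 1) * (k 0 ^ 2 + k 0 * k 1 + k 1 ^ 2
        + (ac ^ 2 + bc ^ 2 - x ^ 2 - y ^ 2 - z ^ 2) * (k 0 + k 1)
        + (ac ^ 2 * bc ^ 2 - x ^ 2 * bc ^ 2 - y ^ 2 * ac ^ 2 - z ^ 2 * (ac ^ 2 + bc ^ 2))) = 0 := by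
      linear_combination R 0 - R 1
    exact (mul_eq_zero.mp h).resolve_left d01
  have Q12 : k 1 ^ 2 + k 1 * k 2 + k 2 ^ 2
      + (ac ^ 2 + bc ^ 2 - x ^ 2 - y ^ 2 - z ^ 2) * (k 1 + k 2)
      + (ac ^ 2 * bc ^ 2 - x ^ 2 * bc ^ 2 - y ^ 2 * ac ^ 2 - z ^ 2 * (ac ^ 2 + bc ^ 2)) = 0 := by
    have h : (k 1 - k 2) * (k 1 ^ 2 + k 1 * k 2 + k 2 ^ 2
        + (ac ^ 2 + bc ^ 2 - x ^ 2 - y ^ 2 - z ^ 2) * (k 1 + k 2)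
        + (ac ^ 2 * bc ^ 2 - x ^ 2 * bc ^ 2 - y ^ 2 * ac ^ 2 - z ^ 2 * (ac ^ 2 + bc ^ 2))) = 0 := by
      linear_combination R 1 - R 2
    exact (mul_eq_zero.mp h).resolve_left d12
  -- first symmetric function
  have hc2 : k 0 + k 1 + k 2 + (ac ^ 2 + bc ^ 2 - x ^ 2 - y ^ 2 - z ^ 2) = 0 := by
    have h : (k 0 - k 2) * (k 0 + k 1 + k 2 + (ac ^ 2 + bc ^ 2 - x ^ 2 - y ^ 2 - z ^ 2)) = 0 := by
      linear_combination Q01 - Q12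
    exact (mul_eq_zero.mp h).resolve_left d02
  -- second and third symmetric functions
  have hE2 : k 0 * k 1 + k 0 * k 2 + k 1 * k 2
      = ac ^ 2 * bc ^ 2 - x ^ 2 * bc ^ 2 - y ^ 2 * ac ^ 2 - z ^ 2 * (ac ^ 2 + bc ^ 2) := by
    linear_combination -Q01 + (k 0 + k 1) * hc2
  have hE3 : k 0 * k 1 * k 2 = z ^ 2 * ac ^ 2 * bc ^ 2 := by
    linear_combination R 0 - k 0 ^ 2 * hc2 + k 0 * hE2
  refine ⟨?_, ?_, ?_⟩
  · have hd : ((ac ^ 2 - bc ^ 2) * ac ^ 2 : ℝ) ≠ 0 := by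
      have h1 : (0:ℝ) < ac ^ 2 - bc ^ 2 := by nlinarith
      have h2 : (0:ℝ) < ac ^ 2 := by positivity
      exact (mul_pos h1 h2).ne'
    rw [eq_div_iff hd]
    linear_combination (-(ac ^ 2 * ac ^ 2)) * hc2 - ac ^ 2 * hE2 - hE3
  · have hd : (bc ^ 2 * (bc ^ 2 - ac ^ 2) : ℝ) ≠ 0 := by
      have h1 : bc ^ 2 - ac ^ 2 < 0 := by nlinarith
      have h2 : (0:ℝ) < bc ^ 2 := by positivity
      exact (mul_neg_of_pos_of_neg h2 h1).ne
    rw [eq_div_iff hd]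
    linear_combination (-(bc ^ 2 * bc ^ 2)) * hc2 - bc ^ 2 * hE2 - hE3
  · rw [eq_div_iff (by positivity : (ac ^ 2 * bc ^ 2 : ℝ) ≠ 0)]
    linear_combination -hE3
end

section
/- Let 0 < b_c < a_c and let P = (x, y, z) ∈ ℝ³. Suppose k₀, k₁, k₂ are pairwise distinct reals, none equal to 0, −b_c², or −a_c², with x²/(a_c² + k_i) + y²/(b_c² + k_i) + z²/k_i = 1 for i = 0, 1, 2. Define n_i := (x/(a_c² + k_i), y/(b_c² + k_i), z/k_i). Then ⟨n_i, n_j⟩ = 0 for all i ≠ j, and ⟨P, n_i⟩ = 1 for all i (inner product of ℝ³). In particular, the three confocal quadrics through P intersect mutually orthogonally at P. -/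
open scoped RealInnerProductSpace

/-- The normal vectors `n_i = (x/(a_c²+k_i), y/(b_c²+k_i), z/k_i)` of the three
confocal quadrics through `P = (x,y,z)` are mutually orthogonal and satisfy
`⟨P, n_i⟩ = 1`. -/
theorem stmt3 (ac bc x y z : ℝ) (hbc : 0 < bc) (hba : bc < ac)
    (k : Fin 3 → ℝ)
    (hinj : Function.Injective k)
    (hk : ∀ i, k i ≠ 0 ∧ k i ≠ -bc ^ 2 ∧ k i ≠ -ac ^ 2)
    (heq : ∀ i, x ^ 2 / (ac ^ 2 + k i) + y ^ 2 / (bc ^ 2 + k i) + z ^ 2 / k i = 1)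
    (P : EuclideanSpace ℝ (Fin 3)) (hP : P = ![x, y, z])
    (n : Fin 3 → EuclideanSpace ℝ (Fin 3))
    (hn : ∀ i, n i = ![x / (ac ^ 2 + k i), y / (bc ^ 2 + k i), z / k i]) :
    (∀ i j, i ≠ j → ⟪n i, n j⟫ = 0) ∧ (∀ i, ⟪P, n i⟫ = 1) := by
  have hA : ∀ i, ac ^ 2 + k i ≠ 0 := fun i => by
    have := (hk i).2.2; intro h; apply this; linarith
  have hB : ∀ i, bc ^ 2 + k i ≠ 0 := fun i => by
    have := (hk i).2.1; intro h; apply this; linarith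
  have hK : ∀ i, k i ≠ 0 := fun i => (hk i).1
  constructor
  · intro i j hij
    have hkij : k i ≠ k j := fun h => hij (hinj h)
    have e1 := heq i
    have e2 := heq j
    simp only [hn, PiLp.inner_apply, RCLike.inner_apply, starRingEnd_apply,
      star_trivial, Fin.sum_univ_three, Matrix.cons_val_zero, Matrix.cons_val_one,
      Matrix.head_cons, Matrix.cons_val_two, Matrix.tail_cons]
    have hsub : k j - k i ≠ 0 := sub_ne_zero.mpr (Ne.symm hkij)
    apply mul_left_cancel₀ hsub
    rw [mul_zero]
    field_simp [hA i, hA j, hB i, hB j, hK i, hK j] at e1 e2 ⊢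
    linear_combination ((ac ^ 2 + k j) * (bc ^ 2 + k j) * k j) * e1 -
      ((ac ^ 2 + k i) * (bc ^ 2 + k i) * k i) * e2
  · intro i
    have e := heq i
    simp only [hP, hn, PiLp.inner_apply, RCLike.inner_apply, starRingEnd_apply,
      star_trivial, Fin.sum_univ_three, Matrix.cons_val_zero, Matrix.cons_val_one,
      Matrix.head_cons, Matrix.cons_val_two, Matrix.tail_cons]
    rw [← e]; ring
end

section
/- Let 0 < b_c < a_c, let k₁, k₁*, k_j be reals with k₁, k₁*, k_j ∉ {0, −b_c², −a_c²} and k_j ≠ k₁. Define F(P, k) := x²/(a_c² + k) + y²/(b_c² + k) + z²/k − 1 for P = (x, y, z), and let P* := (x·√((a_c² + k₁*)/(a_c² + k₁)), y·√((b_c² + k₁*)/(b_c² + k₁)), z·√(k₁*/k₁)), assuming the three radicands are nonnegative. Then F(P*, k_j) = ((k₁* − k₁)/(k_j − k₁))·F(P, k₁) + (1 − (k₁* − k₁)/(k_j − k₁))·F(P, k_j). -/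
/-- Key identity for the axial scaling `γ(k₁, k₁*)` between confocal quadrics:
`F(P*, k_j)` is an affine combination of `F(P, k₁)` and `F(P, k_j)`. -/
theorem stmt4 (ac bc k1 k1s kj : ℝ) (hbc : 0 < bc) (hba : bc < ac)
    (hk1 : k1 ≠ 0 ∧ k1 ≠ -bc ^ 2 ∧ k1 ≠ -ac ^ 2)
    (hk1s : k1s ≠ 0 ∧ k1s ≠ -bc ^ 2 ∧ k1s ≠ -ac ^ 2)
    (hkj : kj ≠ 0 ∧ kj ≠ -bc ^ 2 ∧ kj ≠ -ac ^ 2)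
    (hjk1 : kj ≠ k1)
    (F : ℝ → ℝ → ℝ → ℝ → ℝ)
    (hF : ∀ x y z k, F x y z k =
      x ^ 2 / (ac ^ 2 + k) + y ^ 2 / (bc ^ 2 + k) + z ^ 2 / k - 1)
    (x y z : ℝ)
    (hrad1 : 0 ≤ (ac ^ 2 + k1s) / (ac ^ 2 + k1))
    (hrad2 : 0 ≤ (bc ^ 2 + k1s) / (bc ^ 2 + k1))
    (hrad3 : 0 ≤ k1s / k1) :
    F (x * Real.sqrt ((ac ^ 2 + k1s) / (ac ^ 2 + k1)))
      (y * Real.sqrt ((bc ^ 2 + k1s) / (bc ^ 2 + k1)))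
      (z * Real.sqrt (k1s / k1)) kj =
    (k1s - k1) / (kj - k1) * F x y z k1 +
      (1 - (k1s - k1) / (kj - k1)) * F x y z kj := by
  obtain ⟨h10, h1b, h1a⟩ := hk1
  obtain ⟨hj0, hjb, hja⟩ := hkj
  have ha1 : ac ^ 2 + k1 ≠ 0 := fun h => h1a (by linarith)
  have hb1 : bc ^ 2 + k1 ≠ 0 := fun h => h1b (by linarith)
  have haj : ac ^ 2 + kj ≠ 0 := fun h => hja (by linarith)
  have hbj : bc ^ 2 + kj ≠ 0 := fun h => hjb (by linarith)
  have hjk : kj - k1 ≠ 0 := sub_ne_zero.mpr hjk1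
  simp only [hF, mul_pow, Real.sq_sqrt hrad1, Real.sq_sqrt hrad2, Real.sq_sqrt hrad3]
  field_simp
  ring
end

section
/- Let 0 < b_c < a_c and let k₁, k₁* ∈ (−b_c², 0). Define F(P, k) := x²/(a_c² + k) + y²/(b_c² + k) + z²/k − 1 and let γ(k₁, k₁*) map P = (x, y, z) to P* = (x·√((a_c² + k₁*)/(a_c² + k₁)), y·√((b_c² + k₁*)/(b_c² + k₁)), z·√(k₁*/k₁)). If P satisfies F(P, k₁) = 0 and also F(P, k_j) = 0 for some k_j ∉ {0, −b_c², −a_c²} with k_j ≠ k₁, then P* satisfies F(P*, k₁*) = 0 and F(P*, k_j) = 0. In particular, corresponding points under γ(k₁, k₁*) share the elliptic coordinates k₀ and k₂. -/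
/-!
Subtracting the equations of two confocal quadrics with parameters `k ≠ l` leaves `(l - k)` times
`x²/((a²+k)(a²+l)) + y²/((b²+k)(b²+l)) + z²/(kl)`, so a point lies on both exactly when it lies on
one of them and this "polar" expression vanishes. The axial scaling `γ(k, k')` multiplies `x²`, `y²`,
`z²` by `(a²+k')/(a²+k)`, `(b²+k')/(b²+k)`, `k'/k`, which turns both the quadric with parameter `k`
and its polar expression with any `l` into the corresponding ones for `k'` and `l`, value for value.
-/

section Confocal

variable {K : Type*} [Field K] (A B : K)

def confocalQuadric (x y z k : K) : K :=
  x ^ 2 / (A + k) + y ^ 2 / (B + k) + z ^ 2 / k - 1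

def confocalPolar (x y z k l : K) : K :=
  x ^ 2 / ((A + k) * (A + l)) + y ^ 2 / ((B + k) * (B + l)) + z ^ 2 / (k * l)

/-- `(x', y', z')` is the image of `(x, y, z)` under the axial scaling `γ(k, k')`, up to signs. -/
def IsAxialScaling (k k' x y z x' y' z' : K) : Prop :=
  x' ^ 2 = x ^ 2 * ((A + k') / (A + k)) ∧ y' ^ 2 = y ^ 2 * ((B + k') / (B + k)) ∧
    z' ^ 2 = z ^ 2 * (k' / k)

variable {A B}

theorem confocalQuadric_sub_confocalQuadric {x y z k l : K}
    (hAk : A + k ≠ 0) (hBk : B + k ≠ 0) (hk : k ≠ 0)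
    (hAl : A + l ≠ 0) (hBl : B + l ≠ 0) (hl : l ≠ 0) :
    confocalQuadric A B x y z k - confocalQuadric A B x y z l =
      (l - k) * confocalPolar A B x y z k l := by
  unfold confocalQuadric confocalPolar
  field_simp
  ring

theorem confocalPolar_eq_zero_of_confocalQuadric_eq_zero {x y z k l : K}
    (hAk : A + k ≠ 0) (hBk : B + k ≠ 0) (hk : k ≠ 0)
    (hAl : A + l ≠ 0) (hBl : B + l ≠ 0) (hl : l ≠ 0) (hlk : l ≠ k)
    (hPk : confocalQuadric A B x y z k = 0) (hPl : confocalQuadric A B x y z l = 0) :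
    confocalPolar A B x y z k l = 0 := by
  have h := confocalQuadric_sub_confocalQuadric hAk hBk hk hAl hBl hl (x := x) (y := y) (z := z)
  rw [hPk, hPl, sub_zero, eq_comm, mul_eq_zero] at h
  exact h.resolve_left (sub_ne_zero.mpr hlk)

section Scaling

variable {k k' x y z x' y' z' : K} (hAk' : A + k' ≠ 0) (hBk' : B + k' ≠ 0) (hk' : k' ≠ 0)
  (hγ : IsAxialScaling A B k k' x y z x' y' z')
include hAk' hBk' hk' hγ

theorem IsAxialScaling.confocalQuadric_eq :
    confocalQuadric A B x' y' z' k' = confocalQuadric A B x y z k := by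
  obtain ⟨hx, hy, hz⟩ := hγ
  unfold confocalQuadric
  rw [hx, hy, hz]
  field_simp

theorem IsAxialScaling.confocalPolar_eq (l : K) :
    confocalPolar A B x' y' z' k' l = confocalPolar A B x y z k l := by
  obtain ⟨hx, hy, hz⟩ := hγ
  unfold confocalPolar
  rw [hx, hy, hz]
  field_simp

end Scaling

theorem IsAxialScaling.confocalQuadric_eq_zero {k k' l x y z x' y' z' : K}
    (hγ : IsAxialScaling A B k k' x y z x' y' z')
    (hAk : A + k ≠ 0) (hBk : B + k ≠ 0) (hk : k ≠ 0)
    (hAk' : A + k' ≠ 0) (hBk' : B + k' ≠ 0) (hk' : k' ≠ 0)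
    (hAl : A + l ≠ 0) (hBl : B + l ≠ 0) (hl : l ≠ 0) (hlk : l ≠ k)
    (hPk : confocalQuadric A B x y z k = 0) (hPl : confocalQuadric A B x y z l = 0) :
    confocalQuadric A B x' y' z' k' = 0 ∧ confocalQuadric A B x' y' z' l = 0 := by
  have hP'k' : confocalQuadric A B x' y' z' k' = 0 :=
    (hγ.confocalQuadric_eq hAk' hBk' hk').trans hPk
  have hpolar : confocalPolar A B x' y' z' k' l = 0 :=
    (hγ.confocalPolar_eq hAk' hBk' hk' l).trans
      (confocalPolar_eq_zero_of_confocalQuadric_eq_zero hAk hBk hk hAl hBl hl hlk hPk hPl)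
  refine ⟨hP'k', ?_⟩
  have h := confocalQuadric_sub_confocalQuadric hAk' hBk' hk' hAl hBl hl (x := x') (y := y') (z := z')
  rwa [hP'k', hpolar, mul_zero, zero_sub, neg_eq_zero] at h

end Confocal

theorem isAxialScaling_mul_sqrt {a b k k' : ℝ} (x y z : ℝ)
    (ha : 0 ≤ (a + k') / (a + k)) (hb : 0 ≤ (b + k') / (b + k)) (hk : 0 ≤ k' / k) :
    IsAxialScaling a b k k' x y z (x * √((a + k') / (a + k))) (y * √((b + k') / (b + k)))
      (z * √(k' / k)) := by
  simp only [IsAxialScaling, mul_pow, Real.sq_sqrt, ha, hb, hk, and_self]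

/-- Corresponding points under the axial scaling `γ(k₁, k₁*)` between confocal
one-sheeted hyperboloids share the elliptic coordinates `k₀` and `k₂`:
if `F(P, k₁) = 0` and `F(P, k_j) = 0`, then `F(P*, k₁*) = 0` and
`F(P*, k_j) = 0`. -/
theorem stmt5 (ac bc k1 k1s kj : ℝ) (hbc : 0 < bc) (hba : bc < ac)
    (hk1 : k1 ∈ Set.Ioo (-bc ^ 2) 0) (hk1s : k1s ∈ Set.Ioo (-bc ^ 2) 0)
    (hkj : kj ≠ 0 ∧ kj ≠ -bc ^ 2 ∧ kj ≠ -ac ^ 2)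
    (hjk1 : kj ≠ k1)
    (F : ℝ → ℝ → ℝ → ℝ → ℝ)
    (hF : ∀ x y z k, F x y z k =
      x ^ 2 / (ac ^ 2 + k) + y ^ 2 / (bc ^ 2 + k) + z ^ 2 / k - 1)
    (x y z : ℝ)
    (h1 : F x y z k1 = 0) (hj : F x y z kj = 0) :
    F (x * Real.sqrt ((ac ^ 2 + k1s) / (ac ^ 2 + k1)))
      (y * Real.sqrt ((bc ^ 2 + k1s) / (bc ^ 2 + k1)))
      (z * Real.sqrt (k1s / k1)) k1s = 0 ∧
    F (x * Real.sqrt ((ac ^ 2 + k1s) / (ac ^ 2 + k1)))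
      (y * Real.sqrt ((bc ^ 2 + k1s) / (bc ^ 2 + k1)))
      (z * Real.sqrt (k1s / k1)) kj = 0 := by
  obtain rfl : F = confocalQuadric (ac ^ 2) (bc ^ 2) := by
    funext x y z k
    exact hF x y z k
  obtain ⟨hk1b, hk1⟩ := hk1
  obtain ⟨hk1sb, hk1s⟩ := hk1s
  obtain ⟨hkj, hkjb, hkja⟩ := hkj
  have hbac : bc ^ 2 < ac ^ 2 := pow_lt_pow_left₀ hba hbc.le two_ne_zero
  have hB1 : 0 < bc ^ 2 + k1 := by linarith
  have hA1 : 0 < ac ^ 2 + k1 := by linarith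
  have hB1s : 0 < bc ^ 2 + k1s := by linarith
  have hA1s : 0 < ac ^ 2 + k1s := by linarith
  have hγ := isAxialScaling_mul_sqrt (a := ac ^ 2) (b := bc ^ 2) (k := k1) (k' := k1s) x y z (by positivity) (by positivity)
    (div_pos_of_neg_of_neg hk1s hk1).le
  exact hγ.confocalQuadric_eq_zero hA1.ne' hB1.ne' hk1.ne hA1s.ne' hB1s.ne' hk1s.ne
    (fun h => hkja (eq_neg_of_add_eq_zero_right h)) (fun h => hkjb (eq_neg_of_add_eq_zero_right h))
    hkj hjk1 h1 hj
end

section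
/- Let 0 < b_c < a_c, let k₁ ∈ (−b_c², 0), and let (x, y, z) ∈ ℝ³. For κ ∈ (−b_c², 0) define the path c(κ) := (x·√((a_c² + κ)/(a_c² + k₁)), y·√((b_c² + κ)/(b_c² + k₁)), z·√(κ/k₁)). Then for every κ ∈ (−b_c², 0), c is differentiable at κ and its derivative equals (1/2)·(c(κ)ₓ/(a_c² + κ), c(κ)_y/(b_c² + κ), c(κ)_z/κ), i.e., one half of the normal vector at c(κ) of the confocal one-sheeted hyperboloid with parameter κ. Hence the trajectories of points under the scaling family are orthogonal trajectories of the confocal one-sheeted hyperboloids. -/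
/-! Every coordinate of `c` has the form `x * √((p + κ) / q)`, and differentiating the square
root gives half of that coordinate divided by `p + κ`: exactly the corresponding coordinate of
half the normal vector `(X / (a_c² + κ), Y / (b_c² + κ), Z / κ)`. -/

open scoped ENNReal

theorem hasDerivAt_piLp {𝕜 ι : Type*} [NontriviallyNormedField 𝕜] [Fintype ι] {E : ι → Type*}
    [∀ i, NormedAddCommGroup (E i)] [∀ i, NormedSpace 𝕜 (E i)] (p : ℝ≥0∞) [Fact (1 ≤ p)]
    {f : 𝕜 → PiLp p E} {f' : PiLp p E} {x : 𝕜} :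
    HasDerivAt f f' x ↔ ∀ i, HasDerivAt (fun t => f t i) (f' i) x := by
  rw [← hasDerivAt_pi]
  exact ⟨fun h => (PiLp.hasFDerivAt_ofLp p (f x)).comp_hasDerivAt x h,
    fun h => (PiLp.hasFDerivAt_toLp (𝕜 := 𝕜) p (f x).ofLp).comp_hasDerivAt
      (f := fun t => (f t).ofLp) x h⟩

theorem hasDerivAt_mul_sqrt_add_div {p q t : ℝ} (x : ℝ) (h : 0 < (p + t) / q) :
    HasDerivAt (fun s => x * √((p + s) / q)) (1 / 2 * (x * √((p + t) / q) / (p + t))) t := by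
  have hq : q ≠ 0 := by rintro rfl; simp at h
  have hpt : p + t ≠ 0 := by rintro h'; simp [h'] at h
  have hsq : √((p + t) / q) ^ 2 = (p + t) / q := Real.sq_sqrt h.le
  have hs : √((p + t) / q) ≠ 0 := (Real.sqrt_pos.mpr h).ne'
  refine ((((hasDerivAt_id' t).const_add p).div_const q).sqrt h.ne').const_mul x |>.congr_deriv ?_
  field_simp
  rw [hsq, mul_assoc, mul_div_cancel₀ _ hq]

/-- The trajectories of points under the axial scaling family are orthogonal
trajectories of the confocal one-sheeted hyperboloids: the path
`c(κ) = γ(k₁, κ)(x, y, z)` has at every `κ ∈ (−b_c², 0)` the derivative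
`(1/2)·(c(κ)ₓ/(a_c²+κ), c(κ)_y/(b_c²+κ), c(κ)_z/κ)`, i.e. one half of the
normal vector of the hyperboloid with parameter `κ` at `c(κ)`. -/
theorem stmt6 (ac bc k1 : ℝ) (hbc : 0 < bc) (hba : bc < ac)
    (hk1 : k1 ∈ Set.Ioo (-bc ^ 2) 0)
    (x y z : ℝ)
    (c : ℝ → EuclideanSpace ℝ (Fin 3))
    (hc : ∀ κ, c κ = ![x * Real.sqrt ((ac ^ 2 + κ) / (ac ^ 2 + k1)),
                      y * Real.sqrt ((bc ^ 2 + κ) / (bc ^ 2 + k1)),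
                      z * Real.sqrt (κ / k1)]) :
    ∀ κ ∈ Set.Ioo (-bc ^ 2 : ℝ) 0,
      HasDerivAt c
        ((1 / 2 : ℝ) •
          (WithLp.toLp 2 ![c κ 0 / (ac ^ 2 + κ), c κ 1 / (bc ^ 2 + κ), c κ 2 / κ] :
            EuclideanSpace ℝ (Fin 3))) κ := by
  rintro κ ⟨hκ_lo, hκ_hi⟩
  obtain ⟨hk1_lo, hk1_hi⟩ := hk1
  have hb_lt_a : bc ^ 2 < ac ^ 2 := by gcongr
  rw [hasDerivAt_piLp]
  intro i
  fin_cases i <;> simp only [hc, PiLp.smul_apply, smul_eq_mul]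
  · exact hasDerivAt_mul_sqrt_add_div x (div_pos (by linarith) (by linarith))
  · exact hasDerivAt_mul_sqrt_add_div y (div_pos (by linarith) (by linarith))
  · have h := hasDerivAt_mul_sqrt_add_div (p := 0) (q := k1) (t := κ) z
      (by rw [zero_add]; exact div_pos_of_neg_of_neg hκ_hi hk1_hi)
    simp only [zero_add] at h
    exact h
end

section
/- Let 0 < b_c < a_c and k₁, k₁* ∈ (−b_c², 0). Let P = (x₁, y₁, z₁) and Q = (x₂, y₂, z₂) satisfy x_i²/(a_c² + k₁) + y_i²/(b_c² + k₁) + z_i²/k₁ = 1 for i = 1, 2, together with the polar condition x₁x₂/(a_c² + k₁) + y₁y₂/(b_c² + k₁) + z₁z₂/k₁ = 1 (equivalently, the whole line through P and Q lies on the one-sheeted hyperboloid with parameter k₁). Let P*, Q* be the images of P, Q under the scaling γ(k₁, k₁*) : (x, y, z) ↦ (x√((a_c² + k₁*)/(a_c² + k₁)), y√((b_c² + k₁*)/(b_c² + k₁)), z√(k₁*/k₁)). Then ‖P* − Q*‖ = ‖P − Q‖. -/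
/-!
Write `aᵢ` for the denominators of the quadric and `qₐ(v) = ∑ vᵢ² / aᵢ`. Expanding with the
two incidence conditions and the polar condition gives `qₐ(P - Q) = 1 + 1 - 2 = 0`: the direction
of a generator is isotropic. The scaling multiplies the `i`-th coordinate by `√(aᵢ* / aᵢ)`, and
confocality means `aᵢ* = aᵢ + δ` with one `δ = k₁* - k₁` for all axes, so
`‖γ v‖² = ∑ vᵢ² (1 + δ / aᵢ) = ‖v‖² + δ qₐ(v) = ‖v‖²`.
-/

open Finset

variable {ι : Type*}

theorem sum_sq_sub_div_eq_zero_of_polar [Fintype ι] (a x y : ι → ℝ)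
    (hx : ∑ i, x i ^ 2 / a i = 1) (hy : ∑ i, y i ^ 2 / a i = 1)
    (hxy : ∑ i, x i * y i / a i = 1) : ∑ i, (x i - y i) ^ 2 / a i = 0 := by
  have hexpand : ∑ i, (x i - y i) ^ 2 / a i =
      ∑ i, x i ^ 2 / a i + ∑ i, y i ^ 2 / a i - 2 * ∑ i, x i * y i / a i := by
    rw [mul_sum, ← sum_add_distrib, ← sum_sub_distrib]
    exact sum_congr rfl fun i _ => by ring
  rw [hexpand, hx, hy, hxy]
  norm_num

/-- The scaling `γ` carrying the quadric with denominators `a` to the one with denominators `a'`. -/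
noncomputable def confocalScaling (a a' : ι → ℝ) (v : EuclideanSpace ℝ ι) :
    EuclideanSpace ℝ ι :=
  WithLp.toLp 2 fun i => v i * √(a' i / a i)

theorem confocalScaling_sub (a a' : ι → ℝ) (v w : EuclideanSpace ℝ ι) :
    confocalScaling a a' (v - w) = confocalScaling a a' v - confocalScaling a a' w := by
  ext i
  simp only [confocalScaling, PiLp.sub_apply, PiLp.toLp_apply, sub_mul]

theorem norm_confocalScaling_of_sum_sq_div_eq_zero [Fintype ι] (a a' : ι → ℝ) (δ : ℝ)
    (ha : ∀ i, a i ≠ 0) (hpos : ∀ i, 0 ≤ a' i / a i) (hδ : ∀ i, a' i = a i + δ)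
    (v : EuclideanSpace ℝ ι) (hv : ∑ i, v i ^ 2 / a i = 0) :
    ‖confocalScaling a a' v‖ = ‖v‖ := by
  have hsq : ‖confocalScaling a a' v‖ ^ 2 = ‖v‖ ^ 2 := calc
    ‖confocalScaling a a' v‖ ^ 2 = ∑ i, (v i ^ 2 + δ * (v i ^ 2 / a i)) := by
      rw [EuclideanSpace.real_norm_sq_eq]
      refine sum_congr rfl fun i _ => ?_
      rw [confocalScaling, PiLp.toLp_apply, mul_pow, Real.sq_sqrt (hpos i), hδ i]
      field_simp [ha i]
    _ = ‖v‖ ^ 2 := by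
      rw [sum_add_distrib, ← mul_sum, hv, EuclideanSpace.real_norm_sq_eq, mul_zero, add_zero]
  exact (pow_left_inj₀ (norm_nonneg _) (norm_nonneg _) two_ne_zero).1 hsq

/-- The axial scaling between two confocal one-sheeted hyperboloids preserves
the lengths of segments lying on generators: if `P, Q` lie on the hyperboloid
with parameter `k₁` and satisfy the polar condition (so the line `PQ` is a
generator), then `‖P* − Q*‖ = ‖P − Q‖`. -/
theorem stmt7 (ac bc k1 k1s : ℝ) (hbc : 0 < bc) (hba : bc < ac)
    (hk1 : k1 ∈ Set.Ioo (-bc ^ 2) 0) (hk1s : k1s ∈ Set.Ioo (-bc ^ 2) 0)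
    (x1 y1 z1 x2 y2 z2 : ℝ)
    (hP : x1 ^ 2 / (ac ^ 2 + k1) + y1 ^ 2 / (bc ^ 2 + k1) + z1 ^ 2 / k1 = 1)
    (hQ : x2 ^ 2 / (ac ^ 2 + k1) + y2 ^ 2 / (bc ^ 2 + k1) + z2 ^ 2 / k1 = 1)
    (hpolar : x1 * x2 / (ac ^ 2 + k1) + y1 * y2 / (bc ^ 2 + k1) +
      z1 * z2 / k1 = 1)
    (P Q Ps Qs : EuclideanSpace ℝ (Fin 3))
    (hPdef : P = ![x1, y1, z1]) (hQdef : Q = ![x2, y2, z2])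
    (hPs : Ps = ![x1 * Real.sqrt ((ac ^ 2 + k1s) / (ac ^ 2 + k1)),
                  y1 * Real.sqrt ((bc ^ 2 + k1s) / (bc ^ 2 + k1)),
                  z1 * Real.sqrt (k1s / k1)])
    (hQs : Qs = ![x2 * Real.sqrt ((ac ^ 2 + k1s) / (ac ^ 2 + k1)),
                  y2 * Real.sqrt ((bc ^ 2 + k1s) / (bc ^ 2 + k1)),
                  z2 * Real.sqrt (k1s / k1)]) :
    ‖Ps - Qs‖ = ‖P - Q‖ := by
  obtain ⟨hk1l, hk1u⟩ := hk1
  obtain ⟨hk1sl, hk1su⟩ := hk1s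
  have hab : bc ^ 2 < ac ^ 2 := by gcongr
  set a : Fin 3 → ℝ := ![ac ^ 2 + k1, bc ^ 2 + k1, k1]
  set a' : Fin 3 → ℝ := ![ac ^ 2 + k1s, bc ^ 2 + k1s, k1s]
  have ha : ∀ i, a i ≠ 0 := by
    intro i; fin_cases i <;> simp [a] <;> linarith
  have hpos : ∀ i, 0 ≤ a' i / a i := by
    intro i; fin_cases i <;> simp [a, a']
    · exact div_nonneg (by linarith) (by linarith)
    · exact div_nonneg (by linarith) (by linarith)
    · exact div_nonneg_of_nonpos hk1su.le hk1u.le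
  have hδ : ∀ i, a' i = a i + (k1s - k1) := by
    intro i; fin_cases i <;> simp [a, a']
  have hisotropic : ∑ i, (P - Q) i ^ 2 / a i = 0 := by
    simp only [PiLp.sub_apply]
    apply sum_sq_sub_div_eq_zero_of_polar <;> simpa [Fin.sum_univ_three, hPdef, hQdef, a]
  have hPs' : Ps = confocalScaling a a' P := by
    ext i; fin_cases i <;> simp [confocalScaling, hPs, hPdef, a, a']
  have hQs' : Qs = confocalScaling a a' Q := by
    ext i; fin_cases i <;> simp [confocalScaling, hQs, hQdef, a, a']
  rw [hPs', hQs', ← confocalScaling_sub]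
  exact norm_confocalScaling_of_sum_sq_div_eq_zero a a' (k1s - k1) ha hpos hδ _ hisotropic
end

section
/- Let 0 < b_c < a_c and k₁, k₁* ∈ (−b_c², 0). Let P = (x₁, y₁, z₁) and Q = (x₂, y₂, z₂) both satisfy x_i²/(a_c² + k₁) + y_i²/(b_c² + k₁) + z_i²/k₁ = 1, and let P*, Q* be their images under the scaling γ(k₁, k₁*) : (x, y, z) ↦ (x√((a_c² + k₁*)/(a_c² + k₁)), y√((b_c² + k₁*)/(b_c² + k₁)), z√(k₁*/k₁)). Then the cross distances agree: ‖P − Q*‖ = ‖P* − Q‖ (Ivory's theorem for this pair of confocal one-sheeted hyperboloids). -/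
/-!
Ivory's theorem is an algebraic identity. For a diagonal scaling `x ↦ (sᵢ xᵢ)ᵢ`,
`‖p - s q‖² - ‖s p - q‖² = ∑ᵢ (1 - sᵢ²)(pᵢ² - qᵢ²)`, so the cross distances agree as soon as
the quadratic form `∑ᵢ (1 - sᵢ²) xᵢ²` takes the same value at `p` and `q`. For the scaling
between the confocal quadrics `∑ᵢ xᵢ² / (dᵢ + k) = 1` and `∑ᵢ xᵢ² / (dᵢ + k*) = 1` one has
`1 - sᵢ² = (k - k*) / (dᵢ + k)`, so this form is `k - k*` times the equation of the first quadric.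
-/

namespace EuclideanSpace

variable {ι : Type*} [Fintype ι]

lemma norm_sub_diag_sq_sub_norm_diag_sub_sq (s : ι → ℝ) {p q ps qs : EuclideanSpace ℝ ι}
    (hps : ∀ i, ps i = p i * s i) (hqs : ∀ i, qs i = q i * s i) :
    ‖p - qs‖ ^ 2 - ‖ps - q‖ ^ 2 = ∑ i, (1 - s i ^ 2) * p i ^ 2 - ∑ i, (1 - s i ^ 2) * q i ^ 2 := by
  simp only [EuclideanSpace.norm_sq_eq, Real.norm_eq_abs, sq_abs, PiLp.sub_apply, hps, hqs,
    ← Finset.sum_sub_distrib]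
  exact Finset.sum_congr rfl fun i _ ↦ by ring

lemma norm_sub_diag_eq_norm_diag_sub (s : ι → ℝ) {p q ps qs : EuclideanSpace ℝ ι}
    (hps : ∀ i, ps i = p i * s i) (hqs : ∀ i, qs i = q i * s i)
    (h : ∑ i, (1 - s i ^ 2) * p i ^ 2 = ∑ i, (1 - s i ^ 2) * q i ^ 2) :
    ‖p - qs‖ = ‖ps - q‖ := by
  have := norm_sub_diag_sq_sub_norm_diag_sub_sq s hps hqs
  rw [h, sub_self, sub_eq_zero] at this
  exact (sq_eq_sq₀ (norm_nonneg _) (norm_nonneg _)).1 this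

/-- Ivory's theorem for the confocal family `∑ᵢ xᵢ² / (dᵢ + k) = 1`. -/
theorem norm_sub_diag_eq_norm_diag_sub_of_confocal (d : ι → ℝ) {k ks : ℝ} (hk : ∀ i, d i + k ≠ 0)
    (hks : ∀ i, 0 ≤ (d i + ks) / (d i + k)) {p q ps qs : EuclideanSpace ℝ ι}
    (hp : ∑ i, p i ^ 2 / (d i + k) = 1) (hq : ∑ i, q i ^ 2 / (d i + k) = 1)
    (hps : ∀ i, ps i = p i * √((d i + ks) / (d i + k)))
    (hqs : ∀ i, qs i = q i * √((d i + ks) / (d i + k))) :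
    ‖p - qs‖ = ‖ps - q‖ := by
  have hs : ∀ i, 1 - √((d i + ks) / (d i + k)) ^ 2 = (k - ks) / (d i + k) := fun i ↦ by
    rw [Real.sq_sqrt (hks i)]
    field_simp [hk i]
    ring
  have hform : ∀ x : EuclideanSpace ℝ ι, ∑ i, (1 - √((d i + ks) / (d i + k)) ^ 2) * x i ^ 2 =
      (k - ks) * ∑ i, x i ^ 2 / (d i + k) := fun x ↦ by
    simp only [hs, Finset.mul_sum]
    exact Finset.sum_congr rfl fun i _ ↦ by ring
  refine norm_sub_diag_eq_norm_diag_sub _ hps hqs ?_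
  rw [hform, hform, hp, hq]

end EuclideanSpace

/-- Ivory's theorem for a pair of confocal one-sheeted hyperboloids: if `P, Q`
lie on the hyperboloid with parameter `k₁` and `P*, Q*` are their images under
the axial scaling `γ(k₁, k₁*)`, then `‖P − Q*‖ = ‖P* − Q‖`. -/
theorem stmt8 (ac bc k1 k1s : ℝ) (hbc : 0 < bc) (hba : bc < ac)
    (hk1 : k1 ∈ Set.Ioo (-bc ^ 2) 0) (hk1s : k1s ∈ Set.Ioo (-bc ^ 2) 0)
    (x1 y1 z1 x2 y2 z2 : ℝ)
    (hP : x1 ^ 2 / (ac ^ 2 + k1) + y1 ^ 2 / (bc ^ 2 + k1) + z1 ^ 2 / k1 = 1)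
    (hQ : x2 ^ 2 / (ac ^ 2 + k1) + y2 ^ 2 / (bc ^ 2 + k1) + z2 ^ 2 / k1 = 1)
    (P Q Ps Qs : EuclideanSpace ℝ (Fin 3))
    (hPdef : P = ![x1, y1, z1]) (hQdef : Q = ![x2, y2, z2])
    (hPs : Ps = ![x1 * Real.sqrt ((ac ^ 2 + k1s) / (ac ^ 2 + k1)),
                  y1 * Real.sqrt ((bc ^ 2 + k1s) / (bc ^ 2 + k1)),
                  z1 * Real.sqrt (k1s / k1)])
    (hQs : Qs = ![x2 * Real.sqrt ((ac ^ 2 + k1s) / (ac ^ 2 + k1)),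
                  y2 * Real.sqrt ((bc ^ 2 + k1s) / (bc ^ 2 + k1)),
                  z2 * Real.sqrt (k1s / k1)]) :
    ‖P - Qs‖ = ‖Ps - Q‖ := by
  obtain ⟨hk1_lo, hk1_neg⟩ := hk1
  obtain ⟨hk1s_lo, hk1s_neg⟩ := hk1s
  have hb2a2 : bc ^ 2 < ac ^ 2 := by gcongr
  let d : Fin 3 → ℝ := ![ac ^ 2, bc ^ 2, 0]
  have hk : ∀ i, d i + k1 ≠ 0 := by
    intro i; fin_cases i <;> simp [d] <;> linarith
  have hks : ∀ i, 0 ≤ (d i + k1s) / (d i + k1) := by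
    intro i
    fin_cases i
    · exact div_nonneg (by simp [d]; linarith) (by simp [d]; linarith)
    · exact div_nonneg (by simp [d]; linarith) (by simp [d]; linarith)
    · exact div_nonneg_of_nonpos (by simp [d]; linarith) (by simp [d]; linarith)
  refine EuclideanSpace.norm_sub_diag_eq_norm_diag_sub_of_confocal d hk hks ?_ ?_ ?_ ?_ <;>
    simp [d, Fin.sum_univ_three, Fin.forall_fin_succ, hPdef, hQdef, hPs, hQs, hP, hQ]
end

section
/- Let 0 < b_c < a_c and let P = (x, y, z) have elliptic coordinates k₀, k₁, k₂ with −a_c² < k₂ < −b_c² < k₁ < 0 < k₀, i.e., x²/(a_c² + k_i) + y²/(b_c² + k_i) + z²/k_i = 1 for i = 0, 1, 2. Define n₀ := (x/(a_c² + k₀), y/(b_c² + k₀), z/k₀), n₂ := (x/(a_c² + k₂), y/(b_c² + k₂), z/k₂), and the semiaxes a_e = √(a_c² + k₀), b_e = √(b_c² + k₀), c_e = √k₀, a_{h2} = √(a_c² + k₂), b_{h2} = √(−(b_c² + k₂)), c_{h2} = √(−k₂). Then for each choice of sign, the line through P with direction vector v± := a_e b_e c_e · n₀ ± a_{h2} b_{h2}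 c_{h2} · n₂ lies entirely on the one-sheeted hyperboloid with parameter k₁: for all s ∈ ℝ, (x + s v±ₓ)²/(a_c² + k₁) + (y + s v±_y)²/(b_c² + k₁) + (z + s v±_z)²/k₁ = 1. -/
set_option maxHeartbeats 4000000 in
/-- The two lines through a point `P` with elliptic coordinates
`(k₀, k₁, k₂)` in the directions `v± = a_e b_e c_e · n₀ ± a_{h2} b_{h2} c_{h2} · n₂`
lie entirely on the confocal one-sheeted hyperboloid with parameter `k₁`. -/
theorem stmt9 (ac bc x y z k0 k1 k2 : ℝ) (hbc : 0 < bc) (hba : bc < ac)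
    (hk2 : -ac ^ 2 < k2) (hk2' : k2 < -bc ^ 2) (hk1 : -bc ^ 2 < k1)
    (hk1' : k1 < 0) (hk0 : 0 < k0)
    (h0 : x ^ 2 / (ac ^ 2 + k0) + y ^ 2 / (bc ^ 2 + k0) + z ^ 2 / k0 = 1)
    (h1 : x ^ 2 / (ac ^ 2 + k1) + y ^ 2 / (bc ^ 2 + k1) + z ^ 2 / k1 = 1)
    (h2 : x ^ 2 / (ac ^ 2 + k2) + y ^ 2 / (bc ^ 2 + k2) + z ^ 2 / k2 = 1)
    (ae be ce ah2 bh2 ch2 : ℝ)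
    (hae : ae = Real.sqrt (ac ^ 2 + k0)) (hbe : be = Real.sqrt (bc ^ 2 + k0))
    (hce : ce = Real.sqrt k0)
    (hah2 : ah2 = Real.sqrt (ac ^ 2 + k2))
    (hbh2 : bh2 = Real.sqrt (-(bc ^ 2 + k2)))
    (hch2 : ch2 = Real.sqrt (-k2))
    (σ : ℝ) (hσ : σ = 1 ∨ σ = -1)
    (vx vy vz : ℝ)
    (hvx : vx = ae * be * ce * (x / (ac ^ 2 + k0)) +
      σ * (ah2 * bh2 * ch2 * (x / (ac ^ 2 + k2))))
    (hvy : vy = ae * be * ce * (y / (bc ^ 2 + k0)) +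
      σ * (ah2 * bh2 * ch2 * (y / (bc ^ 2 + k2))))
    (hvz : vz = ae * be * ce * (z / k0) + σ * (ah2 * bh2 * ch2 * (z / k2))) :
    ∀ s : ℝ, (x + s * vx) ^ 2 / (ac ^ 2 + k1) +
      (y + s * vy) ^ 2 / (bc ^ 2 + k1) + (z + s * vz) ^ 2 / k1 = 1 := by
  have hac : 0 < ac := hbc.trans hba
  -- positivity / nonvanishing facts
  have hA0 : (0:ℝ) < ac ^ 2 + k0 := by positivity
  have hB0 : (0:ℝ) < bc ^ 2 + k0 := by positivity
  have hA1 : (0:ℝ) < ac ^ 2 + k1 := by nlinarith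
  have hB1 : (0:ℝ) < bc ^ 2 + k1 := by linarith
  have hA2 : (0:ℝ) < ac ^ 2 + k2 := by linarith
  have hB2 : bc ^ 2 + k2 < 0 := by linarith
  have hk2n : k2 < 0 := by nlinarith
  have hA0' : ac ^ 2 + k0 ≠ 0 := ne_of_gt hA0
  have hB0' : bc ^ 2 + k0 ≠ 0 := ne_of_gt hB0
  have hk0' : k0 ≠ 0 := ne_of_gt hk0
  have hA1' : ac ^ 2 + k1 ≠ 0 := ne_of_gt hA1
  have hB1' : bc ^ 2 + k1 ≠ 0 := ne_of_gt hB1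
  have hk1n : k1 ≠ 0 := ne_of_lt hk1'
  have hA2' : ac ^ 2 + k2 ≠ 0 := ne_of_gt hA2
  have hB2' : bc ^ 2 + k2 ≠ 0 := ne_of_lt hB2
  have hk2ne : k2 ≠ 0 := ne_of_lt hk2n
  have hac2 : ac ^ 2 ≠ 0 := by positivity
  have hbc2 : bc ^ 2 ≠ 0 := by positivity
  have hab : ac ^ 2 - bc ^ 2 ≠ 0 := ne_of_gt (by nlinarith)
  have h01 : k0 - k1 ≠ 0 := ne_of_gt (by linarith)
  have h02 : k0 - k2 ≠ 0 := ne_of_gt (by linarith)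
  have h12 : k1 - k2 ≠ 0 := ne_of_gt (by linarith)
  have hV : (k0 - k1) * ((k0 - k2) * (k1 - k2)) ≠ 0 :=
    mul_ne_zero h01 (mul_ne_zero h02 h12)
  -- cleared (polynomial) forms of the three confocal equations
  have P0 : x ^ 2 * ((bc ^ 2 + k0) * k0) + y ^ 2 * ((ac ^ 2 + k0) * k0)
      + z ^ 2 * ((ac ^ 2 + k0) * (bc ^ 2 + k0))
      = (ac ^ 2 + k0) * ((bc ^ 2 + k0) * k0) := by
    field_simp at h0; linear_combination h0
  have P1 : x ^ 2 * ((bc ^ 2 + k1) * k1) + y ^ 2 * ((ac ^ 2 + k1) * k1)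
      + z ^ 2 * ((ac ^ 2 + k1) * (bc ^ 2 + k1))
      = (ac ^ 2 + k1) * ((bc ^ 2 + k1) * k1) := by
    field_simp at h1; linear_combination h1
  have P2 : x ^ 2 * ((bc ^ 2 + k2) * k2) + y ^ 2 * ((ac ^ 2 + k2) * k2)
      + z ^ 2 * ((ac ^ 2 + k2) * (bc ^ 2 + k2))
      = (ac ^ 2 + k2) * ((bc ^ 2 + k2) * k2) := by
    field_simp at h2; linear_combination h2
  -- explicit elliptic-coordinate formulas for x², y², z²
  have hX : x ^ 2 * (ac ^ 2 * (ac ^ 2 - bc ^ 2))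
      = (ac ^ 2 + k0) * ((ac ^ 2 + k1) * (ac ^ 2 + k2)) := by
    apply mul_right_cancel₀ hV
    linear_combination ((ac ^ 2 + k1) * (ac ^ 2 + k2) * (k1 - k2)) * P0
      - ((ac ^ 2 + k0) * (ac ^ 2 + k2) * (k0 - k2)) * P1
      + ((ac ^ 2 + k0) * (ac ^ 2 + k1) * (k0 - k1)) * P2
  have hY : y ^ 2 * (bc ^ 2 * (ac ^ 2 - bc ^ 2))
      = -((bc ^ 2 + k0) * ((bc ^ 2 + k1) * (bc ^ 2 + k2))) := by
    apply mul_right_cancel₀ hV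
    linear_combination (-((bc ^ 2 + k1) * (bc ^ 2 + k2) * (k1 - k2))) * P0
      + ((bc ^ 2 + k0) * (bc ^ 2 + k2) * (k0 - k2)) * P1
      - ((bc ^ 2 + k0) * (bc ^ 2 + k1) * (k0 - k1)) * P2
  have hZ : z ^ 2 * (ac ^ 2 * bc ^ 2) = k0 * (k1 * k2) := by
    apply mul_right_cancel₀ hV
    linear_combination (k1 * k2 * (k1 - k2)) * P0 - (k0 * k2 * (k0 - k2)) * P1
      + (k0 * k1 * (k0 - k1)) * P2
  have hx2 : x ^ 2 = (ac ^ 2 + k0) * ((ac ^ 2 + k1) * (ac ^ 2 + k2))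
      / (ac ^ 2 * (ac ^ 2 - bc ^ 2)) := by
    rw [eq_div_iff (mul_ne_zero hac2 hab)]; exact hX
  have hy2 : y ^ 2 = -((bc ^ 2 + k0) * ((bc ^ 2 + k1) * (bc ^ 2 + k2)))
      / (bc ^ 2 * (ac ^ 2 - bc ^ 2)) := by
    rw [eq_div_iff (mul_ne_zero hbc2 hab)]; exact hY
  have hz2 : z ^ 2 = k0 * (k1 * k2) / (ac ^ 2 * bc ^ 2) := by
    rw [eq_div_iff (mul_ne_zero hac2 hbc2)]; exact hZ
  -- squares of the semiaxis products
  have hα2 : (ae * be * ce) ^ 2 = (ac ^ 2 + k0) * ((bc ^ 2 + k0) * k0) := by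
    rw [hae, hbe, hce, mul_pow, mul_pow, Real.sq_sqrt hA0.le, Real.sq_sqrt hB0.le,
      Real.sq_sqrt hk0.le]
    ring
  have hβ2 : (ah2 * bh2 * ch2) ^ 2 = (ac ^ 2 + k2) * ((bc ^ 2 + k2) * k2) := by
    rw [hah2, hbh2, hch2, mul_pow, mul_pow, Real.sq_sqrt hA2.le,
      Real.sq_sqrt (by linarith : (0:ℝ) ≤ -(bc ^ 2 + k2)),
      Real.sq_sqrt (by linarith : (0:ℝ) ≤ -k2)]
    ring
  have hσ2 : σ ^ 2 = 1 := by rcases hσ with h | h <;> rw [h] <;> norm_num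
  -- termwise values of the fractions appearing below
  have t1 : x ^ 2 / ((ac ^ 2 + k1) * (ac ^ 2 + k0) ^ 2)
      = (ac ^ 2 + k2) / ((ac ^ 2 + k0) * (ac ^ 2 * (ac ^ 2 - bc ^ 2))) := by
    rw [hx2]; field_simp
  have t2 : x ^ 2 / ((ac ^ 2 + k1) * ((ac ^ 2 + k0) * (ac ^ 2 + k2)))
      = 1 / (ac ^ 2 * (ac ^ 2 - bc ^ 2)) := by
    rw [hx2]; field_simp
  have t3 : x ^ 2 / ((ac ^ 2 + k1) * (ac ^ 2 + k2) ^ 2)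
      = (ac ^ 2 + k0) / ((ac ^ 2 + k2) * (ac ^ 2 * (ac ^ 2 - bc ^ 2))) := by
    rw [hx2]; field_simp
  have t4 : x ^ 2 / ((ac ^ 2 + k1) * (ac ^ 2 + k0))
      = (ac ^ 2 + k2) / (ac ^ 2 * (ac ^ 2 - bc ^ 2)) := by
    rw [hx2]; field_simp
  have t5 : x ^ 2 / ((ac ^ 2 + k1) * (ac ^ 2 + k2))
      = (ac ^ 2 + k0) / (ac ^ 2 * (ac ^ 2 - bc ^ 2)) := by
    rw [hx2]; field_simp
  have u1 : y ^ 2 / ((bc ^ 2 + k1) * (bc ^ 2 + k0) ^ 2)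
      = -(bc ^ 2 + k2) / ((bc ^ 2 + k0) * (bc ^ 2 * (ac ^ 2 - bc ^ 2))) := by
    rw [hy2]; field_simp
  have u2 : y ^ 2 / ((bc ^ 2 + k1) * ((bc ^ 2 + k0) * (bc ^ 2 + k2)))
      = -1 / (bc ^ 2 * (ac ^ 2 - bc ^ 2)) := by
    rw [hy2]; field_simp
  have u3 : y ^ 2 / ((bc ^ 2 + k1) * (bc ^ 2 + k2) ^ 2)
      = -(bc ^ 2 + k0) / ((bc ^ 2 + k2) * (bc ^ 2 * (ac ^ 2 - bc ^ 2))) := by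
    rw [hy2]; field_simp
  have u4 : y ^ 2 / ((bc ^ 2 + k1) * (bc ^ 2 + k0))
      = -(bc ^ 2 + k2) / (bc ^ 2 * (ac ^ 2 - bc ^ 2)) := by
    rw [hy2]; field_simp
  have u5 : y ^ 2 / ((bc ^ 2 + k1) * (bc ^ 2 + k2))
      = -(bc ^ 2 + k0) / (bc ^ 2 * (ac ^ 2 - bc ^ 2)) := by
    rw [hy2]; field_simp
  have w1 : z ^ 2 / (k1 * k0 ^ 2) = k2 / (k0 * (ac ^ 2 * bc ^ 2)) := by
    rw [hz2]; field_simp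
  have w2 : z ^ 2 / (k1 * (k0 * k2)) = 1 / (ac ^ 2 * bc ^ 2) := by
    rw [hz2]; field_simp
  have w3 : z ^ 2 / (k1 * k2 ^ 2) = k0 / (k2 * (ac ^ 2 * bc ^ 2)) := by
    rw [hz2]; field_simp
  have w4 : z ^ 2 / (k1 * k0) = k2 / (ac ^ 2 * bc ^ 2) := by
    rw [hz2]; field_simp
  have w5 : z ^ 2 / (k1 * k2) = k0 / (ac ^ 2 * bc ^ 2) := by
    rw [hz2]; field_simp
  -- coordinatewise expansions of the bilinear and quadratic pieces
  have lx : x * vx / (ac ^ 2 + k1)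
      = ae * be * ce * (x ^ 2 / ((ac ^ 2 + k1) * (ac ^ 2 + k0)))
        + σ * (ah2 * bh2 * ch2) * (x ^ 2 / ((ac ^ 2 + k1) * (ac ^ 2 + k2))) := by
    rw [hvx]; field_simp
  have ly : y * vy / (bc ^ 2 + k1)
      = ae * be * ce * (y ^ 2 / ((bc ^ 2 + k1) * (bc ^ 2 + k0)))
        + σ * (ah2 * bh2 * ch2) * (y ^ 2 / ((bc ^ 2 + k1) * (bc ^ 2 + k2))) := by
    rw [hvy]; field_simp
  have lz : z * vz / k1
      = ae * be * ce * (z ^ 2 / (k1 * k0))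
        + σ * (ah2 * bh2 * ch2) * (z ^ 2 / (k1 * k2)) := by
    rw [hvz]; field_simp
  have qx : vx ^ 2 / (ac ^ 2 + k1)
      = (ae * be * ce) ^ 2 * (x ^ 2 / ((ac ^ 2 + k1) * (ac ^ 2 + k0) ^ 2))
        + 2 * (σ * (ae * be * ce * (ah2 * bh2 * ch2)))
          * (x ^ 2 / ((ac ^ 2 + k1) * ((ac ^ 2 + k0) * (ac ^ 2 + k2))))
        + σ ^ 2 * ((ah2 * bh2 * ch2) ^ 2
          * (x ^ 2 / ((ac ^ 2 + k1) * (ac ^ 2 + k2) ^ 2))) := by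
    rw [hvx]; field_simp; ring
  have qy : vy ^ 2 / (bc ^ 2 + k1)
      = (ae * be * ce) ^ 2 * (y ^ 2 / ((bc ^ 2 + k1) * (bc ^ 2 + k0) ^ 2))
        + 2 * (σ * (ae * be * ce * (ah2 * bh2 * ch2)))
          * (y ^ 2 / ((bc ^ 2 + k1) * ((bc ^ 2 + k0) * (bc ^ 2 + k2))))
        + σ ^ 2 * ((ah2 * bh2 * ch2) ^ 2
          * (y ^ 2 / ((bc ^ 2 + k1) * (bc ^ 2 + k2) ^ 2))) := by
    rw [hvy]; field_simp; ring
  have qz : vz ^ 2 / k1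
      = (ae * be * ce) ^ 2 * (z ^ 2 / (k1 * k0 ^ 2))
        + 2 * (σ * (ae * be * ce * (ah2 * bh2 * ch2)))
          * (z ^ 2 / (k1 * (k0 * k2)))
        + σ ^ 2 * ((ah2 * bh2 * ch2) ^ 2 * (z ^ 2 / (k1 * k2 ^ 2))) := by
    rw [hvz]; field_simp; ring
  -- the linear coefficient vanishes
  have hL : x * vx / (ac ^ 2 + k1) + y * vy / (bc ^ 2 + k1) + z * vz / k1 = 0 := by
    rw [lx, ly, lz, t4, t5, u4, u5, w4, w5]
    field_simp
    ring
  -- the quadratic coefficient vanishes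
  have G0 : (ac ^ 2 + k0) * ((bc ^ 2 + k0) * k0)
        * ((ac ^ 2 + k2) / ((ac ^ 2 + k0) * (ac ^ 2 * (ac ^ 2 - bc ^ 2))))
      + (ac ^ 2 + k0) * ((bc ^ 2 + k0) * k0)
        * (-(bc ^ 2 + k2) / ((bc ^ 2 + k0) * (bc ^ 2 * (ac ^ 2 - bc ^ 2))))
      + (ac ^ 2 + k0) * ((bc ^ 2 + k0) * k0)
        * (k2 / (k0 * (ac ^ 2 * bc ^ 2))) = k2 - k0 := by
    field_simp
    ring
  have G2 : (ac ^ 2 + k2) * ((bc ^ 2 + k2) * k2)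
        * ((ac ^ 2 + k0) / ((ac ^ 2 + k2) * (ac ^ 2 * (ac ^ 2 - bc ^ 2))))
      + (ac ^ 2 + k2) * ((bc ^ 2 + k2) * k2)
        * (-(bc ^ 2 + k0) / ((bc ^ 2 + k2) * (bc ^ 2 * (ac ^ 2 - bc ^ 2))))
      + (ac ^ 2 + k2) * ((bc ^ 2 + k2) * k2)
        * (k0 / (k2 * (ac ^ 2 * bc ^ 2))) = k0 - k2 := by
    field_simp
    ring
  have C : 1 / (ac ^ 2 * (ac ^ 2 - bc ^ 2)) + -1 / (bc ^ 2 * (ac ^ 2 - bc ^ 2))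
      + 1 / (ac ^ 2 * bc ^ 2) = 0 := by
    field_simp
    ring
  have hQ : vx ^ 2 / (ac ^ 2 + k1) + vy ^ 2 / (bc ^ 2 + k1) + vz ^ 2 / k1 = 0 := by
    rw [qx, qy, qz, t1, t2, t3, u1, u2, u3, w1, w2, w3, hα2, hβ2, hσ2]
    linear_combination G0 + G2 + (2 * (σ * (ae * be * ce * (ah2 * bh2 * ch2)))) * C
  intro s
  have e : (x + s * vx) ^ 2 / (ac ^ 2 + k1) + (y + s * vy) ^ 2 / (bc ^ 2 + k1)
      + (z + s * vz) ^ 2 / k1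
      = (x ^ 2 / (ac ^ 2 + k1) + y ^ 2 / (bc ^ 2 + k1) + z ^ 2 / k1)
        + (2 * s) * (x * vx / (ac ^ 2 + k1) + y * vy / (bc ^ 2 + k1) + z * vz / k1)
        + s ^ 2 * (vx ^ 2 / (ac ^ 2 + k1) + vy ^ 2 / (bc ^ 2 + k1) + vz ^ 2 / k1) := by
    ring
  rw [e, h1, hL, hQ]; ring
end

section
/- Let 0 < b_c < a_c and let P = (x, y, z) have elliptic coordinates k₀, k₁, k₂ with −a_c² < k₂ < −b_c² < k₁ < 0 < k₀ (i.e., x²/(a_c² + k_i) + y²/(b_c² + k_i) + z²/k_i = 1 for i = 0, 1, 2). With n₀, n₂ and the semiaxes a_e, b_e, c_e, a_{h2}, b_{h2}, c_{h2} as in the confocal setup, set v± := a_e b_e c_e · n₀ ± a_{h2} b_{h2} c_{h2} · n₂ (the two generator directions of the one-sheeted hyperboloid ℋ₁ through P). Then the reflection in the tangent plane to the ellipsoid ℰ at P, i.e., the linear map w ↦ w − 2(⟨w, n₀⟩/‖n₀‖²)·n₀, maps v₊ to −v₋. Hence this reflection exchanges the two generators of ℋ₁ through P. -/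
/-!
Two confocal quadrics through a point meet orthogonally there: subtracting the equations of the
quadrics with parameters `k ≠ k'` gives `(k' - k) ⟪n_k, n_k'⟫ = 0`, because
`1 / (d + k) - 1 / (d + k') = (k' - k) / ((d + k) (d + k'))`. Hence `n₂ ⟂ n₀`, and the reflection
in `n₀ᗮ` sends `a n₀ + b n₂` to `-a n₀ + b n₂`, whatever the coefficients `a` and `b`.
-/

open scoped RealInnerProductSpace

/-- The normal at `p` to the quadric `∑ i, p i ^ 2 / (d i + k) = 1`; the paper's family is
`d = ![a_c ^ 2, b_c ^ 2, 0]`. -/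
noncomputable def confocalNormal {ι : Type*} (d : ι → ℝ) (k : ℝ) (p : ι → ℝ) :
    EuclideanSpace ℝ ι :=
  WithLp.toLp 2 fun i ↦ p i / (d i + k)

theorem inner_confocalNormal_eq_zero {ι : Type*} [Fintype ι] {d p : ι → ℝ} {k k' : ℝ}
    (hk : ∀ i, d i + k ≠ 0) (hk' : ∀ i, d i + k' ≠ 0) (hne : k ≠ k')
    (hp : ∑ i, p i ^ 2 / (d i + k) = 1) (hp' : ∑ i, p i ^ 2 / (d i + k') = 1) :
    ⟪confocalNormal d k p, confocalNormal d k' p⟫ = 0 := by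
  have hterm : ∀ i, p i ^ 2 / (d i + k) - p i ^ 2 / (d i + k') =
      (k' - k) * (p i / (d i + k') * (p i / (d i + k))) := by
    intro i
    field_simp [hk i, hk' i]
    ring
  have hsum : (k' - k) * ⟪confocalNormal d k p, confocalNormal d k' p⟫ = 0 := by
    simp only [confocalNormal, PiLp.inner_apply, RCLike.inner_apply, conj_trivial, Finset.mul_sum,
      ← hterm, Finset.sum_sub_distrib, hp, hp', sub_self]
  exact (mul_eq_zero.mp hsum).resolve_left (sub_ne_zero.mpr hne.symm)

theorem reflection_add_smul_of_inner_eq_zero {E : Type*} [NormedAddCommGroup E]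
    [InnerProductSpace ℝ E] {n m : E} (h : ⟪m, n⟫ = 0) (a b : ℝ) :
    (a • n + b • m) - (2 * (⟪a • n + b • m, n⟫ / ‖n‖ ^ 2)) • n = -(a • n - b • m) := by
  rcases eq_or_ne n 0 with rfl | hn
  · simp
  have hinner : ⟪a • n + b • m, n⟫ = a * ‖n‖ ^ 2 := by
    rw [inner_add_left, real_inner_smul_left, real_inner_smul_left, h,
      real_inner_self_eq_norm_sq, mul_zero, add_zero]
  rw [hinner, mul_div_cancel_right₀ a (pow_ne_zero 2 (norm_ne_zero_iff.mpr hn))]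
  module

theorem stmt10_general (ac bc x y z k0 k2 : ℝ)
    (hk2 : -ac ^ 2 < k2) (hk2' : k2 < -bc ^ 2) (hk0 : 0 < k0)
    (h0 : x ^ 2 / (ac ^ 2 + k0) + y ^ 2 / (bc ^ 2 + k0) + z ^ 2 / k0 = 1)
    (h2 : x ^ 2 / (ac ^ 2 + k2) + y ^ 2 / (bc ^ 2 + k2) + z ^ 2 / k2 = 1)
    (ae be ce ah2 bh2 ch2 : ℝ)
    (n0 n2 vplus vminus : EuclideanSpace ℝ (Fin 3))
    (hn0 : n0 = ![x / (ac ^ 2 + k0), y / (bc ^ 2 + k0), z / k0])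
    (hn2 : n2 = ![x / (ac ^ 2 + k2), y / (bc ^ 2 + k2), z / k2])
    (hvp : vplus = (ae * be * ce) • n0 + (ah2 * bh2 * ch2) • n2)
    (hvm : vminus = (ae * be * ce) • n0 - (ah2 * bh2 * ch2) • n2) :
    vplus - (2 * (⟪vplus, n0⟫ / ‖n0‖ ^ 2)) • n0 = -vminus := by
  set d : Fin 3 → ℝ := ![ac ^ 2, bc ^ 2, 0]
  set p : Fin 3 → ℝ := ![x, y, z]
  have hd0 : ∀ i, d i + k0 ≠ 0 := by
    intro i; fin_cases i <;> simp [d] <;> nlinarith [sq_nonneg ac, sq_nonneg bc]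
  have hd2 : ∀ i, d i + k2 ≠ 0 := by
    intro i; fin_cases i <;> simp [d] <;> nlinarith [sq_nonneg ac, sq_nonneg bc]
  have hn0' : n0 = confocalNormal d k0 p := by
    ext i; fin_cases i <;> simp [hn0, confocalNormal, d, p]
  have hn2' : n2 = confocalNormal d k2 p := by
    ext i; fin_cases i <;> simp [hn2, confocalNormal, d, p]
  have horth : ⟪n2, n0⟫ = 0 := by
    rw [hn0', hn2']
    refine inner_confocalNormal_eq_zero hd2 hd0 (by nlinarith [sq_nonneg bc]) ?_ ?_
    · simpa [Fin.sum_univ_three, d, p] using h2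
    · simpa [Fin.sum_univ_three, d, p] using h0
  rw [hvm, hvp]
  exact reflection_add_smul_of_inner_eq_zero horth _ _

/-- The reflection in the tangent plane of the ellipsoid `ℰ` at `P` maps the
generator direction `v₊` of the confocal one-sheeted hyperboloid `ℋ₁` through
`P` to `−v₋`: it exchanges the two generators of `ℋ₁` through `P`. -/
theorem stmt10 (ac bc x y z k0 k1 k2 : ℝ) (hbc : 0 < bc) (hba : bc < ac)
    (hk2 : -ac ^ 2 < k2) (hk2' : k2 < -bc ^ 2) (hk1 : -bc ^ 2 < k1)
    (hk1' : k1 < 0) (hk0 : 0 < k0)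
    (h0 : x ^ 2 / (ac ^ 2 + k0) + y ^ 2 / (bc ^ 2 + k0) + z ^ 2 / k0 = 1)
    (h1 : x ^ 2 / (ac ^ 2 + k1) + y ^ 2 / (bc ^ 2 + k1) + z ^ 2 / k1 = 1)
    (h2 : x ^ 2 / (ac ^ 2 + k2) + y ^ 2 / (bc ^ 2 + k2) + z ^ 2 / k2 = 1)
    (ae be ce ah2 bh2 ch2 : ℝ)
    (hae : ae = Real.sqrt (ac ^ 2 + k0)) (hbe : be = Real.sqrt (bc ^ 2 + k0))
    (hce : ce = Real.sqrt k0)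
    (hah2 : ah2 = Real.sqrt (ac ^ 2 + k2))
    (hbh2 : bh2 = Real.sqrt (-(bc ^ 2 + k2)))
    (hch2 : ch2 = Real.sqrt (-k2))
    (n0 n2 vplus vminus : EuclideanSpace ℝ (Fin 3))
    (hn0 : n0 = ![x / (ac ^ 2 + k0), y / (bc ^ 2 + k0), z / k0])
    (hn2 : n2 = ![x / (ac ^ 2 + k2), y / (bc ^ 2 + k2), z / k2])
    (hvp : vplus = (ae * be * ce) • n0 + (ah2 * bh2 * ch2) • n2)
    (hvm : vminus = (ae * be * ce) • n0 - (ah2 * bh2 * ch2) • n2) :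
    vplus - (2 * (⟪vplus, n0⟫ / ‖n0‖ ^ 2)) • n0 = -vminus :=
  stmt10_general ac bc x y z k0 k2 hk2 hk2' hk0 h0 h2 ae be ce ah2 bh2 ch2 n0 n2 vplus vminus hn0
    hn2 hvp hvm
end

section
/- Let 0 < b_c < a_c and let P = (x, y, z) have elliptic coordinates k₀, k₁, k₂ with −a_c² < k₂ < −b_c² < k₁ < 0 < k₀. With n₀, n₂ and the generator direction v := a_e b_e c_e · n₀ + a_{h2} b_{h2} c_{h2} · n₂ of the one-sheeted hyperboloid ℋ₁ through P, the angle θ/2 between the side direction v and the tangent plane of the ellipsoid ℰ at P satisfies sin²(θ/2) = ⟨v, n₀⟩² / (‖v‖² · ‖n₀‖²) = (k₀ − k₁)/(k₀ − k₂) and tan²(θ/2) = (⟨v, n₀⟩² · ‖n₂‖²) / (⟨v, n₂⟩² · ‖n₀‖²) = (k₀ − k₁)/(k₁ − k₂). -/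
/-!
The normals `n₀`, `n₂` of two confocal quadrics through a point are orthogonal (the difference of
their equations is `(k₂ - k₀) ⟪n₀, n₂⟫`), so with `v = α n₀ + β n₂` we get `⟪v, n₀⟫ = α ‖n₀‖²`,
`⟪v, n₂⟫ = β ‖n₂‖²` and `‖v‖² = α² ‖n₀‖² + β² ‖n₂‖²`. The elliptic coordinates are the roots of a
cubic in `k`; evaluating it at `-a_c²`, `-b_c²`, `0` gives `x²`, `y²`, `z²`, whence
`α² ‖n₀‖² = (k₀ - k₁)(k₀ - k₂)` and `β² ‖n₂‖² = (k₀ - k₂)(k₁ - k₂)`, with sum `(k₀ - k₂)²`.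
-/

open scoped RealInnerProductSpace

section OrthogonalCombination

variable {E : Type*} [NormedAddCommGroup E] [InnerProductSpace ℝ E] {u w : E}

theorem inner_smul_add_smul_left_of_inner_eq_zero (h : ⟪w, u⟫ = 0) (a b : ℝ) :
    ⟪a • u + b • w, u⟫ = a * ‖u‖ ^ 2 := by
  rw [inner_add_left, real_inner_smul_left, real_inner_smul_left, h,
    real_inner_self_eq_norm_sq, mul_zero, add_zero]

theorem norm_smul_add_smul_sq_of_inner_eq_zero (h : ⟪u, w⟫ = 0) (a b : ℝ) :
    ‖a • u + b • w‖ ^ 2 = a ^ 2 * ‖u‖ ^ 2 + b ^ 2 * ‖w‖ ^ 2 := by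
  rw [norm_add_sq_real, real_inner_smul_left, real_inner_smul_right, h, norm_smul, norm_smul,
    Real.norm_eq_abs, Real.norm_eq_abs, mul_pow, mul_pow, sq_abs, sq_abs]
  ring

theorem inner_sq_div_norm_sq_mul_norm_sq_of_inner_eq_zero (h : ⟪u, w⟫ = 0) (hu : u ≠ 0)
    (a b : ℝ) :
    ⟪a • u + b • w, u⟫ ^ 2 / (‖a • u + b • w‖ ^ 2 * ‖u‖ ^ 2) =
      a ^ 2 * ‖u‖ ^ 2 / (a ^ 2 * ‖u‖ ^ 2 + b ^ 2 * ‖w‖ ^ 2) := by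
  have hu' : ‖u‖ ^ 2 ≠ 0 := by positivity
  rw [inner_smul_add_smul_left_of_inner_eq_zero (real_inner_comm u w ▸ h),
    norm_smul_add_smul_sq_of_inner_eq_zero h,
    show (a * ‖u‖ ^ 2) ^ 2 = a ^ 2 * ‖u‖ ^ 2 * ‖u‖ ^ 2 by ring, mul_div_mul_right _ _ hu']

theorem inner_sq_mul_norm_sq_div_of_inner_eq_zero (h : ⟪u, w⟫ = 0) (hu : u ≠ 0) (hw : w ≠ 0)
    (a b : ℝ) :
    ⟪a • u + b • w, u⟫ ^ 2 * ‖w‖ ^ 2 / (⟪a • u + b • w, w⟫ ^ 2 * ‖u‖ ^ 2) =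
      a ^ 2 * ‖u‖ ^ 2 / (b ^ 2 * ‖w‖ ^ 2) := by
  have huw : ‖u‖ ^ 2 * ‖w‖ ^ 2 ≠ 0 := by positivity
  rw [inner_smul_add_smul_left_of_inner_eq_zero (real_inner_comm u w ▸ h), add_comm,
    inner_smul_add_smul_left_of_inner_eq_zero h,
    show (a * ‖u‖ ^ 2) ^ 2 * ‖w‖ ^ 2 = a ^ 2 * ‖u‖ ^ 2 * (‖u‖ ^ 2 * ‖w‖ ^ 2) by ring,
    show (b * ‖w‖ ^ 2) ^ 2 * ‖u‖ ^ 2 = b ^ 2 * ‖w‖ ^ 2 * (‖u‖ ^ 2 * ‖w‖ ^ 2) by ring,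
    mul_div_mul_right _ _ huw]

end OrthogonalCombination

theorem sq_sqrt_mul_sqrt_mul_sqrt {a b c : ℝ} (ha : 0 ≤ a) (hb : 0 ≤ b) (hc : 0 ≤ c) :
    (√a * √b * √c) ^ 2 = a * b * c := by
  rw [mul_pow, mul_pow, Real.sq_sqrt ha, Real.sq_sqrt hb, Real.sq_sqrt hc]

namespace Confocal

variable {A B x y z : ℝ}

noncomputable def normal (A B x y z k : ℝ) : EuclideanSpace ℝ (Fin 3) :=
  WithLp.toLp 2 ![x / (A + k), y / (B + k), z / k]

/-- `(A + k) (B + k) k · (1 - x²/(A + k) - y²/(B + k) - z²/k)`: its roots are the parameters of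
the confocal quadrics through `(x, y, z)`. -/
def cubic (A B x y z k : ℝ) : ℝ :=
  (A + k) * (B + k) * k - x ^ 2 * (B + k) * k - y ^ 2 * (A + k) * k - z ^ 2 * (A + k) * (B + k)

theorem inner_normal (k l : ℝ) :
    ⟪normal A B x y z k, normal A B x y z l⟫ =
      x / (A + k) * (x / (A + l)) + y / (B + k) * (y / (B + l)) + z / k * (z / l) := by
  simp only [normal, PiLp.inner_apply, RCLike.inner_apply, Real.ringHom_apply, Fin.sum_univ_three,
    Matrix.cons_val_zero, Matrix.cons_val_one, Matrix.cons_val]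
  ring

theorem inner_normal_eq_zero {k l : ℝ} (hkl : k ≠ l) (hAk : A + k ≠ 0) (hBk : B + k ≠ 0)
    (hk : k ≠ 0) (hAl : A + l ≠ 0) (hBl : B + l ≠ 0) (hl : l ≠ 0)
    (hk_eq : x ^ 2 / (A + k) + y ^ 2 / (B + k) + z ^ 2 / k = 1)
    (hl_eq : x ^ 2 / (A + l) + y ^ 2 / (B + l) + z ^ 2 / l = 1) :
    ⟪normal A B x y z k, normal A B x y z l⟫ = 0 := by
  have key : (l - k) * ⟪normal A B x y z k, normal A B x y z l⟫ =
      (x ^ 2 / (A + k) + y ^ 2 / (B + k) + z ^ 2 / k) -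
        (x ^ 2 / (A + l) + y ^ 2 / (B + l) + z ^ 2 / l) := by
    rw [inner_normal]
    field_simp
    ring
  rw [hk_eq, hl_eq, sub_self] at key
  exact (mul_eq_zero.mp key).resolve_left (sub_ne_zero.mpr hkl.symm)

theorem cubic_eq_zero {k : ℝ} (hAk : A + k ≠ 0) (hBk : B + k ≠ 0) (hk : k ≠ 0)
    (h : x ^ 2 / (A + k) + y ^ 2 / (B + k) + z ^ 2 / k = 1) : cubic A B x y z k = 0 := by
  field_simp at h
  unfold cubic
  linear_combination -h

theorem cubic_eq_prod {k₀ k₁ k₂ : ℝ} (h01 : k₀ ≠ k₁) (h02 : k₀ ≠ k₂) (h12 : k₁ ≠ k₂)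
    (h₀ : cubic A B x y z k₀ = 0) (h₁ : cubic A B x y z k₁ = 0) (h₂ : cubic A B x y z k₂ = 0)
    (k : ℝ) : cubic A B x y z k = (k - k₀) * (k - k₁) * (k - k₂) := by
  have hD : (k₀ - k₁) * (k₀ - k₂) * (k₁ - k₂) ≠ 0 := by
    simp [sub_ne_zero, h01, h02, h12]
  apply mul_left_cancel₀ hD
  unfold cubic at *
  -- Lagrange interpolation of the quadratic `cubic - ∏ (k - kᵢ)` at the nodes `k₀, k₁, k₂`
  linear_combination (k - k₁) * (k - k₂) * (k₁ - k₂) * h₀ - (k - k₀) * (k - k₂) * (k₀ - k₂) * h₁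
    + (k - k₀) * (k - k₁) * (k₀ - k₁) * h₂

theorem norm_sq_normal_mul {k k' k'' : ℝ} (hA : A ≠ 0) (hB : B ≠ 0) (hAB : A ≠ B)
    (hAk : A + k ≠ 0) (hBk : B + k ≠ 0) (hk : k ≠ 0)
    (hcubic : ∀ t, cubic A B x y z t = (t - k) * (t - k') * (t - k'')) :
    ‖normal A B x y z k‖ ^ 2 * ((A + k) * (B + k) * k) = (k - k') * (k - k'') := by
  have hAB' : A - B ≠ 0 := sub_ne_zero.mpr hAB
  simp only [cubic] at hcubic
  have hx : x ^ 2 = (A + k) * (A + k') * (A + k'') / (A * (A - B)) := by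
    rw [eq_div_iff (by positivity)]
    linear_combination -(hcubic (-A))
  have hy : y ^ 2 = -((B + k) * (B + k') * (B + k'')) / (B * (A - B)) := by
    rw [eq_div_iff (by positivity)]
    linear_combination hcubic (-B)
  have hz : z ^ 2 = k * k' * k'' / (A * B) := by
    rw [eq_div_iff (by positivity)]
    linear_combination -(hcubic 0)
  have hnorm : ‖normal A B x y z k‖ ^ 2 =
      x ^ 2 / (A + k) ^ 2 + y ^ 2 / (B + k) ^ 2 + z ^ 2 / k ^ 2 := by
    rw [← real_inner_self_eq_norm_sq, inner_normal]
    simp only [← sq, div_pow]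
  rw [hnorm, hx, hy, hz]
  field_simp
  ring

/-- Elliptic coordinates of `(x, y, z)` for the confocal family with `A = a_c²`, `B = b_c²`. -/
structure IsEllipticCoords (A B x y z k₀ k₁ k₂ : ℝ) : Prop where
  B_pos : 0 < B
  B_lt_A : B < A
  neg_A_lt_k₂ : -A < k₂
  k₂_lt_neg_B : k₂ < -B
  neg_B_lt_k₁ : -B < k₁
  k₁_neg : k₁ < 0
  k₀_pos : 0 < k₀
  eq₀ : x ^ 2 / (A + k₀) + y ^ 2 / (B + k₀) + z ^ 2 / k₀ = 1
  eq₁ : x ^ 2 / (A + k₁) + y ^ 2 / (B + k₁) + z ^ 2 / k₁ = 1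
  eq₂ : x ^ 2 / (A + k₂) + y ^ 2 / (B + k₂) + z ^ 2 / k₂ = 1

namespace IsEllipticCoords

variable {k₀ k₁ k₂ : ℝ}

theorem cubic_eq_prod (h : IsEllipticCoords A B x y z k₀ k₁ k₂) (t : ℝ) :
    cubic A B x y z t = (t - k₀) * (t - k₁) * (t - k₂) := by
  obtain ⟨hB, hBA, hk₂, hk₂', hk₁, hk₁', hk₀, h₀, h₁, h₂⟩ := h
  exact Confocal.cubic_eq_prod (by linarith) (by linarith) (by linarith)
    (cubic_eq_zero (by linarith) (by linarith) hk₀.ne' h₀)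
    (cubic_eq_zero (by linarith) (by linarith) hk₁'.ne h₁)
    (cubic_eq_zero (by linarith) (by linarith) (by linarith) h₂) t

theorem norm_sq_normal₀ (h : IsEllipticCoords A B x y z k₀ k₁ k₂) :
    ‖normal A B x y z k₀‖ ^ 2 * ((A + k₀) * (B + k₀) * k₀) = (k₀ - k₁) * (k₀ - k₂) := by
  have hB := h.B_pos
  have hBA := h.B_lt_A
  have hk₀ := h.k₀_pos
  exact norm_sq_normal_mul (by linarith) hB.ne' hBA.ne' (by linarith) (by linarith) hk₀.ne'
    h.cubic_eq_prod

theorem norm_sq_normal₂ (h : IsEllipticCoords A B x y z k₀ k₁ k₂) :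
    ‖normal A B x y z k₂‖ ^ 2 * ((A + k₂) * (B + k₂) * k₂) = (k₀ - k₂) * (k₁ - k₂) := by
  have hB := h.B_pos
  have hBA := h.B_lt_A
  have hk₂ := h.neg_A_lt_k₂
  have hk₂' := h.k₂_lt_neg_B
  linear_combination norm_sq_normal_mul (k' := k₀) (k'' := k₁) (by linarith) hB.ne' hBA.ne'
    (by linarith) (by linarith) (by linarith) fun t => by rw [h.cubic_eq_prod]; ring

theorem normal₀_ne_zero (h : IsEllipticCoords A B x y z k₀ k₁ k₂) : normal A B x y z k₀ ≠ 0 := by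
  intro hn
  have hN := h.norm_sq_normal₀
  rw [hn, norm_zero] at hN
  nlinarith [h.k₀_pos, h.k₁_neg, h.B_pos, h.k₂_lt_neg_B]

theorem normal₂_ne_zero (h : IsEllipticCoords A B x y z k₀ k₁ k₂) : normal A B x y z k₂ ≠ 0 := by
  intro hn
  have hN := h.norm_sq_normal₂
  rw [hn, norm_zero] at hN
  nlinarith [h.k₀_pos, h.k₁_neg, h.neg_B_lt_k₁, h.k₂_lt_neg_B]

theorem inner_normal₀₂ (h : IsEllipticCoords A B x y z k₀ k₁ k₂) :
    ⟪normal A B x y z k₀, normal A B x y z k₂⟫ = 0 := by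
  obtain ⟨hB, hBA, hk₂, hk₂', -, -, hk₀, h₀, -, h₂⟩ := h
  exact inner_normal_eq_zero (by linarith) (by linarith) (by linarith) hk₀.ne' (by linarith)
    (by linarith) (by linarith) h₀ h₂

end IsEllipticCoords

end Confocal

open Confocal in
/-- The angle `θ/2` between a generator direction
`v = a_e b_e c_e · n₀ + a_{h2} b_{h2} c_{h2} · n₂` of the one-sheeted
hyperboloid through `P` and the tangent plane of the ellipsoid at `P`
satisfies `sin²(θ/2) = (k₀ − k₁)/(k₀ − k₂)` and
`tan²(θ/2) = (k₀ − k₁)/(k₁ − k₂)`. -/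
theorem stmt11 (ac bc x y z k0 k1 k2 : ℝ) (hbc : 0 < bc) (hba : bc < ac)
    (hk2 : -ac ^ 2 < k2) (hk2' : k2 < -bc ^ 2) (hk1 : -bc ^ 2 < k1)
    (hk1' : k1 < 0) (hk0 : 0 < k0)
    (h0 : x ^ 2 / (ac ^ 2 + k0) + y ^ 2 / (bc ^ 2 + k0) + z ^ 2 / k0 = 1)
    (h1 : x ^ 2 / (ac ^ 2 + k1) + y ^ 2 / (bc ^ 2 + k1) + z ^ 2 / k1 = 1)
    (h2 : x ^ 2 / (ac ^ 2 + k2) + y ^ 2 / (bc ^ 2 + k2) + z ^ 2 / k2 = 1)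
    (ae be ce ah2 bh2 ch2 : ℝ)
    (hae : ae = Real.sqrt (ac ^ 2 + k0)) (hbe : be = Real.sqrt (bc ^ 2 + k0))
    (hce : ce = Real.sqrt k0)
    (hah2 : ah2 = Real.sqrt (ac ^ 2 + k2))
    (hbh2 : bh2 = Real.sqrt (-(bc ^ 2 + k2)))
    (hch2 : ch2 = Real.sqrt (-k2))
    (n0 n2 v : EuclideanSpace ℝ (Fin 3))
    (hn0 : n0 = ![x / (ac ^ 2 + k0), y / (bc ^ 2 + k0), z / k0])
    (hn2 : n2 = ![x / (ac ^ 2 + k2), y / (bc ^ 2 + k2), z / k2])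
    (hv : v = (ae * be * ce) • n0 + (ah2 * bh2 * ch2) • n2) :
    ⟪v, n0⟫ ^ 2 / (‖v‖ ^ 2 * ‖n0‖ ^ 2) = (k0 - k1) / (k0 - k2) ∧
    ⟪v, n0⟫ ^ 2 * ‖n2‖ ^ 2 / (⟪v, n2⟫ ^ 2 * ‖n0‖ ^ 2) = (k0 - k1) / (k1 - k2) := by
  have hB : 0 < bc ^ 2 := by positivity
  have hP : IsEllipticCoords (ac ^ 2) (bc ^ 2) x y z k0 k1 k2 :=
    ⟨hB, pow_lt_pow_left₀ hba hbc.le two_ne_zero, hk2, hk2', hk1, hk1', hk0, h0, h1, h2⟩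
  obtain rfl : n0 = normal (ac ^ 2) (bc ^ 2) x y z k0 := WithLp.ofLp_injective 2 hn0
  obtain rfl : n2 = normal (ac ^ 2) (bc ^ 2) x y z k2 := WithLp.ofLp_injective 2 hn2
  have hα : (ae * be * ce) ^ 2 * ‖normal (ac ^ 2) (bc ^ 2) x y z k0‖ ^ 2 =
      (k0 - k1) * (k0 - k2) := by
    rw [hae, hbe, hce, sq_sqrt_mul_sqrt_mul_sqrt (by positivity) (by positivity) hk0.le]
    linear_combination hP.norm_sq_normal₀
  have hβ : (ah2 * bh2 * ch2) ^ 2 * ‖normal (ac ^ 2) (bc ^ 2) x y z k2‖ ^ 2 =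
      (k0 - k2) * (k1 - k2) := by
    rw [hah2, hbh2, hch2, sq_sqrt_mul_sqrt_mul_sqrt (by linarith) (by linarith) (by linarith)]
    linear_combination hP.norm_sq_normal₂
  have h02 : k0 - k2 ≠ 0 := (sub_pos.mpr (by linarith)).ne'
  subst hv
  rw [inner_sq_div_norm_sq_mul_norm_sq_of_inner_eq_zero hP.inner_normal₀₂ hP.normal₀_ne_zero,
    inner_sq_mul_norm_sq_div_of_inner_eq_zero hP.inner_normal₀₂ hP.normal₀_ne_zero
      hP.normal₂_ne_zero, hα, hβ]
  constructor
  · rw [show (k0 - k1) * (k0 - k2) + (k0 - k2) * (k1 - k2) = (k0 - k1 + (k1 - k2)) * (k0 - k2) by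
      ring, sub_add_sub_cancel, mul_div_mul_right _ _ h02]
  · rw [mul_comm (k0 - k2) (k1 - k2), mul_div_mul_right _ _ h02]
end

section
/- Let 0 < b_c < a_c, k₀ > 0, and k₁ ∈ (−b_c², 0). Define a_e := √(a_c² + k₀), b_e := √(b_c² + k₀), a_{h1} := √(a_c² + k₁), b_{h1} := √(b_c² + k₁), and for t ∈ ℝ let k₂(t) := −(a_c² sin²t + b_c² cos²t) and e(t) := ((a_e a_{h1}/a_c)·cos t, (b_e b_{h1}/b_c)·sin t, √(k₀ k₁ k₂(t))/(a_c b_c)) (note k₀k₁k₂(t) ≥ 0). Then for every t: (i) e(t) lies on the ellipsoid with parameter k₀, i.e., x(t)²/(a_c² + k₀) + y(t)²/(b_c² + k₀) + z(t)²/k₀ = 1; (ii) e(t) lies on the one-sheeted hyperboloid with parameter k₁, i.e., the same equation holds with k₁ in place of k₀; (iii) if sin t · cos t ≠ 0, e(t) lies on the two-sheeted hyperboloid with parameter k₂(t). -/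
open Real

set_option maxHeartbeats 1000000 in
/-- The parametrized curve `e(t)` lies on the ellipsoid with parameter `k₀`,
on the one-sheeted hyperboloid with parameter `k₁`, and (for
`sin t · cos t ≠ 0`) on the two-sheeted hyperboloid with parameter `k₂(t)`. -/
theorem stmt14 (ac bc k0 k1 : ℝ) (hbc : 0 < bc) (hba : bc < ac)
    (hk0 : 0 < k0) (hk1 : k1 ∈ Set.Ioo (-bc ^ 2) 0)
    (ae be ah1 bh1 : ℝ)
    (hae : ae = Real.sqrt (ac ^ 2 + k0)) (hbe : be = Real.sqrt (bc ^ 2 + k0))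
    (hah1 : ah1 = Real.sqrt (ac ^ 2 + k1))
    (hbh1 : bh1 = Real.sqrt (bc ^ 2 + k1))
    (k2 : ℝ → ℝ)
    (hk2 : ∀ t, k2 t = -(ac ^ 2 * sin t ^ 2 + bc ^ 2 * cos t ^ 2))
    (ex ey ez : ℝ → ℝ)
    (hex : ∀ t, ex t = ae * ah1 / ac * cos t)
    (hey : ∀ t, ey t = be * bh1 / bc * sin t)
    (hez : ∀ t, ez t = Real.sqrt (k0 * k1 * k2 t) / (ac * bc)) :
    ∀ t : ℝ,
      (ex t ^ 2 / (ac ^ 2 + k0) + ey t ^ 2 / (bc ^ 2 + k0) + ez t ^ 2 / k0 = 1) ∧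
      (ex t ^ 2 / (ac ^ 2 + k1) + ey t ^ 2 / (bc ^ 2 + k1) + ez t ^ 2 / k1 = 1) ∧
      (sin t * cos t ≠ 0 →
        ex t ^ 2 / (ac ^ 2 + k2 t) + ey t ^ 2 / (bc ^ 2 + k2 t) +
          ez t ^ 2 / k2 t = 1) := by
  obtain ⟨hk1l, hk1u⟩ := hk1
  have hac : (0:ℝ) < ac := hbc.trans hba
  intro t
  have hA0 : (0:ℝ) < ac ^ 2 + k0 := by positivity
  have hB0 : (0:ℝ) < bc ^ 2 + k0 := by positivity
  have hA1 : (0:ℝ) < ac ^ 2 + k1 := by nlinarith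
  have hB1 : (0:ℝ) < bc ^ 2 + k1 := by nlinarith
  have hk1ne : k1 ≠ 0 := hk1u.ne
  have hk2le : k2 t ≤ 0 := by
    rw [hk2]; nlinarith [sq_nonneg (sin t), sq_nonneg (cos t)]
  have hz2 : ez t ^ 2 = k0 * k1 * k2 t / (ac * bc) ^ 2 := by
    rw [hez, div_pow, Real.sq_sqrt]
    rw [mul_assoc]
    have h := mul_nonneg (neg_nonneg.2 hk1u.le) (neg_nonneg.2 hk2le)
    nlinarith
  have hx2 : ex t ^ 2 = (ac ^ 2 + k0) * (ac ^ 2 + k1) / ac ^ 2 * cos t ^ 2 := by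
    rw [hex, hae, hah1, mul_pow, div_pow, mul_pow, Real.sq_sqrt hA0.le,
      Real.sq_sqrt hA1.le]
  have hy2 : ey t ^ 2 = (bc ^ 2 + k0) * (bc ^ 2 + k1) / bc ^ 2 * sin t ^ 2 := by
    rw [hey, hbe, hbh1, mul_pow, div_pow, mul_pow, Real.sq_sqrt hB0.le,
      Real.sq_sqrt hB1.le]
  rw [hx2, hy2, hz2, hk2 t]
  refine ⟨?_, ?_, ?_⟩
  · field_simp
    rw [sin_sq]; ring
  · field_simp
    rw [sin_sq]; ring
  · intro hst
    have hsne : sin t ≠ 0 := fun h => hst (by rw [h]; ring)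
    have hcne : cos t ≠ 0 := fun h => hst (by rw [h]; ring)
    have hdiff : (0:ℝ) < ac ^ 2 - bc ^ 2 := by nlinarith
    have eA : ac ^ 2 + -(ac ^ 2 * sin t ^ 2 + bc ^ 2 * cos t ^ 2)
        = (ac ^ 2 - bc ^ 2) * cos t ^ 2 := by
      rw [sin_sq]; ring
    have eB : bc ^ 2 + -(ac ^ 2 * sin t ^ 2 + bc ^ 2 * cos t ^ 2)
        = -((ac ^ 2 - bc ^ 2) * sin t ^ 2) := by
      rw [cos_sq']; ring
    have hk2pos : (0:ℝ) < ac ^ 2 * sin t ^ 2 + bc ^ 2 * cos t ^ 2 := by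
      have hs2 : (0:ℝ) < sin t ^ 2 :=
        (sq_nonneg (sin t)).lt_of_ne ((pow_ne_zero 2 hsne).symm)
      have h1 := mul_pos (pow_pos hac 2) hs2
      have h2 := mul_nonneg (sq_nonneg bc) (sq_nonneg (cos t))
      linarith
    have hk2ne : -(ac ^ 2 * sin t ^ 2 + bc ^ 2 * cos t ^ 2) ≠ 0 :=
      neg_ne_zero.mpr hk2pos.ne'
    rw [eA, eB]
    have e1 : (ac ^ 2 + k0) * (ac ^ 2 + k1) / ac ^ 2 * cos t ^ 2 /
        ((ac ^ 2 - bc ^ 2) * cos t ^ 2)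
        = (ac ^ 2 + k0) * (ac ^ 2 + k1) / (ac ^ 2 * (ac ^ 2 - bc ^ 2)) := by
      rw [div_eq_div_iff (by positivity) (by positivity)]
      field_simp
    have e2 : (bc ^ 2 + k0) * (bc ^ 2 + k1) / bc ^ 2 * sin t ^ 2 /
        -((ac ^ 2 - bc ^ 2) * sin t ^ 2)
        = -((bc ^ 2 + k0) * (bc ^ 2 + k1) / (bc ^ 2 * (ac ^ 2 - bc ^ 2))) := by
      rw [div_neg, neg_eq_iff_eq_neg, neg_neg,
        div_eq_div_iff (by positivity) (by positivity)]
      field_simp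
    have e3 : k0 * k1 * -(ac ^ 2 * sin t ^ 2 + bc ^ 2 * cos t ^ 2) / (ac * bc) ^ 2 /
        -(ac ^ 2 * sin t ^ 2 + bc ^ 2 * cos t ^ 2)
        = k0 * k1 / (ac * bc) ^ 2 := by
      rw [div_div, mul_comm ((ac * bc) ^ 2), ← div_div,
        mul_div_assoc, div_self hk2ne, mul_one]
    rw [e1, e2, e3]
    field_simp
    ring
end

section
/- Let 0 < b_c < a_c, k₀ > 0, k₁ ∈ (−b_c², 0), and with a_e = √(a_c² + k₀), b_e = √(b_c² + k₀), a_{h1} = √(a_c² + k₁), b_{h1} = √(b_c² + k₁), k₂(t) = −(a_c² sin²t + b_c² cos²t), consider the curve e(t) = ((a_e a_{h1}/a_c)·cos t, (b_e b_{h1}/b_c)·sin t, √(k₀ k₁ k₂(t))/(a_c b_c)). Then for every t with sin t · cos t ≠ 0, e is differentiable at t and the squared norm of its derivative equals ‖e′(t)‖² = (k₀ − k₂(t))·(k₁ − k₂(t)) / (−k₂(t)). -/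
/-!
Write `e = (A cos t, B sin t, w t)` with `w = √(k₀k₁k₂)/(a_c b_c)`. Since
`k₂ = -b_c² - (a_c² - b_c²) sin² t ≤ -b_c² < 0`, the radicand stays positive, so `e` is smooth and
`w'² = k₀k₁k₂'²/(4 k₂ a_c² b_c²)` with `k₂' = -2(a_c² - b_c²) sin t cos t`. Substituting
`cos² t = 1 - sin² t`, the sum `A² sin² t + B² cos² t + w'²` is a rational function of `sin² t`
that collapses to `(k₀ - k₂)(k₁ - k₂)/(-k₂)`.
-/

open Real

theorem HasDerivAt.toLp {𝕜 ι : Type*} [NontriviallyNormedField 𝕜] [Fintype ι] {E : ι → Type*}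
    [∀ i, NormedAddCommGroup (E i)] [∀ i, NormedSpace 𝕜 (E i)] (p : ENNReal) [Fact (1 ≤ p)]
    {f : 𝕜 → ∀ i, E i} {f' : ∀ i, E i} {t : 𝕜} (hf : HasDerivAt f f' t) :
    HasDerivAt (fun s => WithLp.toLp p (f s)) (WithLp.toLp p f') t :=
  (PiLp.hasFDerivAt_toLp p (f t)).comp_hasDerivAt t hf

theorem hasDerivAt_vecCons_three {𝕜 E : Type*} [NontriviallyNormedField 𝕜] [NormedAddCommGroup E]
    [NormedSpace 𝕜 E] {f g h : 𝕜 → E} {f' g' h' : E} {t : 𝕜} (hf : HasDerivAt f f' t)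
    (hg : HasDerivAt g g' t) (hh : HasDerivAt h h' t) :
    HasDerivAt (fun s => ![f s, g s, h s]) ![f', g', h'] t := by
  refine hasDerivAt_pi.2 fun i => ?_
  fin_cases i
  exacts [hf, hg, hh]

theorem EuclideanSpace.norm_toLp_vecCons_three_sq (x y z : ℝ) :
    ‖WithLp.toLp 2 ![x, y, z]‖ ^ 2 = x ^ 2 + y ^ 2 + z ^ 2 := by
  simp [EuclideanSpace.norm_sq_eq, Fin.sum_univ_three]

theorem hasDerivAt_neg_sq_sin_add_sq_cos (a b t : ℝ) :
    HasDerivAt (fun s => -(a ^ 2 * sin s ^ 2 + b ^ 2 * cos s ^ 2))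
      (-(2 * (a ^ 2 - b ^ 2) * sin t * cos t)) t := by
  have hsin := ((hasDerivAt_sin t).fun_pow 2).const_mul (a ^ 2)
  have hcos := ((hasDerivAt_cos t).fun_pow 2).const_mul (b ^ 2)
  refine (hsin.fun_add hcos).fun_neg.congr_deriv ?_
  norm_num
  ring

theorem sq_div_two_sqrt {u : ℝ} (hu : 0 ≤ u) (v : ℝ) : (v / (2 * √u)) ^ 2 = v ^ 2 / (4 * u) := by
  rw [div_pow, mul_pow, sq_sqrt hu]
  norm_num

theorem confocal_speed_sq_identity {a b k0 k1 k2 s c : ℝ} (ha : a ≠ 0) (hb : b ≠ 0)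
    (hsc : s ^ 2 + c ^ 2 = 1) (hk2 : k2 = -(a ^ 2 * s ^ 2 + b ^ 2 * c ^ 2)) (hk2₀ : k2 ≠ 0) :
    (a ^ 2 + k0) * (a ^ 2 + k1) / a ^ 2 * s ^ 2 + (b ^ 2 + k0) * (b ^ 2 + k1) / b ^ 2 * c ^ 2
      + k0 * k1 * (2 * (a ^ 2 - b ^ 2) * s * c) ^ 2 / (4 * k2 * (a * b) ^ 2)
      = (k0 - k2) * (k1 - k2) / (-k2) := by
  have hneg : -k2 ≠ 0 := neg_ne_zero.2 hk2₀
  field_simp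
  rw [show c ^ 2 = 1 - s ^ 2 by linarith] at hk2 ⊢
  subst hk2
  ring

/-- The squared speed of the line of curvature `e = ℰ ∩ ℋ₁`:
`‖e′(t)‖² = (k₀ − k₂(t))(k₁ − k₂(t))/(−k₂(t))` wherever `sin t · cos t ≠ 0`. -/
theorem stmt15 (ac bc k0 k1 : ℝ) (hbc : 0 < bc) (hba : bc < ac)
    (hk0 : 0 < k0) (hk1 : k1 ∈ Set.Ioo (-bc ^ 2) 0)
    (ae be ah1 bh1 : ℝ)
    (hae : ae = Real.sqrt (ac ^ 2 + k0)) (hbe : be = Real.sqrt (bc ^ 2 + k0))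
    (hah1 : ah1 = Real.sqrt (ac ^ 2 + k1))
    (hbh1 : bh1 = Real.sqrt (bc ^ 2 + k1))
    (k2 : ℝ → ℝ)
    (hk2 : ∀ t, k2 t = -(ac ^ 2 * sin t ^ 2 + bc ^ 2 * cos t ^ 2))
    (e : ℝ → EuclideanSpace ℝ (Fin 3))
    (he : ∀ t, e t = ![ae * ah1 / ac * cos t, be * bh1 / bc * sin t,
      Real.sqrt (k0 * k1 * k2 t) / (ac * bc)]) :
    ∀ t : ℝ, sin t * cos t ≠ 0 →
      DifferentiableAt ℝ e t ∧
      ‖deriv e t‖ ^ 2 = (k0 - k2 t) * (k1 - k2 t) / (-k2 t) := by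
  intro t _
  obtain ⟨hk1l, hk1r⟩ := hk1
  have hac : 0 < ac := hbc.trans hba
  have hk2t : k2 t < 0 := by
    rw [hk2]
    have hbc_le : bc ^ 2 ≤ ac ^ 2 := pow_le_pow_left₀ hbc.le hba.le 2
    nlinarith [sin_sq_add_cos_sq t, mul_nonneg (sub_nonneg.2 hbc_le) (sq_nonneg (sin t))]
  have hu : 0 < k0 * k1 * k2 t := mul_pos_of_neg_of_neg (mul_neg_of_pos_of_neg hk0 hk1r) hk2t
  have hdk2 : HasDerivAt k2 (-(2 * (ac ^ 2 - bc ^ 2) * sin t * cos t)) t := by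
    rw [funext hk2]
    exact hasDerivAt_neg_sq_sin_add_sq_cos ac bc t
  have hde : HasDerivAt e
      (WithLp.toLp 2 ![-(ae * ah1 / ac) * sin t, be * bh1 / bc * cos t,
        k0 * k1 * -(2 * (ac ^ 2 - bc ^ 2) * sin t * cos t) / (2 * √(k0 * k1 * k2 t)) / (ac * bc)])
      t := by
    have he' : e = fun s => WithLp.toLp 2 ![ae * ah1 / ac * cos s, be * bh1 / bc * sin s,
        √(k0 * k1 * k2 s) / (ac * bc)] := funext fun s => by rw [← he s, WithLp.toLp_ofLp]
    rw [he']
    refine (hasDerivAt_vecCons_three (E := ℝ) ?_ ?_ ?_).toLp 2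
    · simpa using (hasDerivAt_cos t).const_mul (ae * ah1 / ac)
    · exact (hasDerivAt_sin t).const_mul _
    · exact ((hdk2.const_mul (k0 * k1)).sqrt hu.ne').div_const _
  refine ⟨hde.differentiableAt, ?_⟩
  have hsq_sqrt : ∀ {x y : ℝ}, 0 ≤ y → x = √y → y = x ^ 2 := fun hy hx => hx ▸ (sq_sqrt hy).symm
  rw [hde.deriv, EuclideanSpace.norm_toLp_vecCons_three_sq, div_pow _ (ac * bc),
    sq_div_two_sqrt hu.le,
    ← confocal_speed_sq_identity hac.ne' hbc.ne' (sin_sq_add_cos_sq t) (hk2 t) hk2t.ne,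
    hsq_sqrt (by positivity) hae, hsq_sqrt (by positivity) hbe, hsq_sqrt (by nlinarith) hah1,
    hsq_sqrt (by linarith) hbh1]
  field_simp
end

section
/- Let N ≥ 1 and J > 0 be given. Let p : ZMod N → ℝ³ be a closed polygon with p(i+1) ≠ p(i) for all i, let u(i) := (p(i+1) − p(i))/‖p(i+1) − p(i)‖ be the unit side vectors, and let n : ZMod N → ℝ³ be vectors with n(i) ≠ 0, ⟨p(i), n(i)⟩ = 1, and the reflection relation u(i−1) − u(i) = (2J/‖n(i)‖²) · n(i) for all i. Then Σ_{i} ⟨u(i−1), u(i)⟩ = N − J · L, where L := Σ_{i} ‖p(i+1) − p(i)‖ is the perimeter. Equivalently, with θ_i the exterior angle at p(i) (so cos θ_i = ⟨u(i−1), u(i)⟩), Σ cos θ_i = N − J·L. -/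
open scoped RealInnerProductSpace

/-- Sum of cosines of the exterior angles of a closed billiard polygon with
constant Joachimsthal integral `J`: for a closed polygon `p` in `ℝ³` with unit
side vectors `u i` and normals `n i` satisfying `⟨p i, n i⟩ = 1` and the
reflection law `u (i−1) − u i = (2J/‖n i‖²) • n i`, one has
`Σ ⟨u (i−1), u i⟩ = N − J·L`, where `L` is the perimeter; i.e.
`Σ cos θ_i = N − J·L`. -/
theorem stmt18 (N : ℕ) [NeZero N] (J : ℝ) (hJ : 0 < J)
    (p u n : ZMod N → EuclideanSpace ℝ (Fin 3))
    (hside : ∀ i, p (i + 1) ≠ p i)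
    (hu : ∀ i, u i = ‖p (i + 1) - p i‖⁻¹ • (p (i + 1) - p i))
    (hn : ∀ i, n i ≠ 0)
    (hpn : ∀ i, ⟪p i, n i⟫ = 1)
    (hrefl : ∀ i, u (i - 1) - u i = (2 * J / ‖n i‖ ^ 2) • n i)
    (L : ℝ) (hL : L = ∑ i : ZMod N, ‖p (i + 1) - p i‖) :
    ∑ i : ZMod N, ⟪u (i - 1), u i⟫ = N - J * L := by
  have hsn : ∀ i, ‖p (i + 1) - p i‖ ≠ 0 := fun i =>
    norm_ne_zero_iff.mpr (sub_ne_zero.mpr (hside i))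
  have hunorm : ∀ i, ‖u i‖ = 1 := by
    intro i
    rw [hu i, norm_smul, norm_inv, norm_norm, inv_mul_cancel₀ (hsn i)]
  -- key per-term identity
  have key : ∀ i : ZMod N, ⟪u (i - 1), u i⟫ = 1 - J * ⟪u (i - 1) - u i, p i⟫ := by
    intro i
    have hnn : ‖n i‖ ≠ 0 := norm_ne_zero_iff.mpr (hn i)
    have hip : ⟪u (i - 1) - u i, p i⟫ = 2 * J / ‖n i‖ ^ 2 := by
      rw [hrefl i, real_inner_smul_left, real_inner_comm, hpn i, mul_one]
    have hns : ‖u (i - 1) - u i‖ ^ 2 = (2 * J / ‖n i‖ ^ 2) ^ 2 * ‖n i‖ ^ 2 := by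
      rw [hrefl i, norm_smul, mul_pow, Real.norm_eq_abs, sq_abs]
    have hexp : ‖u (i - 1) - u i‖ ^ 2
        = ‖u (i - 1)‖ ^ 2 - 2 * ⟪u (i - 1), u i⟫ + ‖u i‖ ^ 2 :=
      norm_sub_sq_real _ _
    rw [hunorm, hunorm] at hexp
    rw [hip]
    have h2 : ⟪u (i - 1), u i⟫ = 1 - (2 * J / ‖n i‖ ^ 2) ^ 2 * ‖n i‖ ^ 2 / 2 := by
      rw [← hns]; linarith [hexp]
    rw [h2]
    field_simp
  rw [Finset.sum_congr rfl (fun i _ => key i)]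
  rw [Finset.sum_sub_distrib, Finset.sum_const, ← Finset.mul_sum]
  have hcard : (Finset.univ : Finset (ZMod N)).card = N := by
    simp [ZMod.card]
  have hsum : ∑ i : ZMod N, ⟪u (i - 1) - u i, p i⟫ = L := by
    have h1 : ∑ i : ZMod N, ⟪u (i - 1), p i⟫ = ∑ i : ZMod N, ⟪u i, p (i + 1)⟫ := by
      exact (Fintype.sum_equiv (Equiv.addRight (1 : ZMod N))
        (fun j => ⟪u j, p (j + 1)⟫) (fun i => ⟪u (i - 1), p i⟫)
        (fun j => by simp)).symm
    have h2 : ∀ i : ZMod N, ⟪u i, p (i + 1)⟫ - ⟪u i, p i⟫ = ‖p (i + 1) - p i‖ := by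
      intro i
      rw [← inner_sub_right, hu i, real_inner_smul_left,
        real_inner_self_eq_norm_sq, pow_two, inv_mul_cancel_left₀ (hsn i)]
    calc ∑ i : ZMod N, ⟪u (i - 1) - u i, p i⟫
        = ∑ i : ZMod N, (⟪u (i - 1), p i⟫ - ⟪u i, p i⟫) := by
          simp [inner_sub_left]
      _ = ∑ i : ZMod N, (⟪u i, p (i + 1)⟫ - ⟪u i, p i⟫) := by
          rw [Finset.sum_sub_distrib, Finset.sum_sub_distrib, h1]
      _ = ∑ i : ZMod N, ‖p (i + 1) - p i‖ := Finset.sum_congr rfl (fun i _ => h2 i)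
      _ = L := hL.symm
  rw [hsum, hcard]
  simp
end
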